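/- arXiv:1705.08524 — 7 statements merged into one kernel-verified Lean document; each statement's English description precedes it below -/
import Mathlib

section
/- Fix a partition P = (S_1,…,S_n) of V(G) into sets of size r, and assign treatment by choosing independently for each block S_i a uniformly random p-subset of its r elements to treat. If each interference function f_v is K_v-Lipschitz, then |E[ξ]| ≤ (1/(n r (r−1))) Σ_{v ∈ V(G)} (|P_v ∩ N(v)| / d(v)) K_v, where P_v is the block of P containing v. -/
open Finset

/-!
Fix a vertex `v` with block `B`. Swapping `v` with an untreated `u ∈ B` preserves the design,
so `∑_T Z_T(v) g(T)` equals `∑_{u ∈ B - v} ∑_{v ∈ T, u ∉ T} (g(T) - g((u v)T))`. Since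
`v ∉ N(v)`, the sets `T ∩ N(v)` and `(u v)T ∩ N(v)` differ at most in `u`, so by the Lipschitz
condition each difference is at most `K_v / d(v)`, and is zero unless `u ∈ N(v)`. The same
symmetry makes `#{T : v ∈ T, u ∉ T}` independent of `u`, and double counting evaluates it as
`pq |D| / (r (r - 1))`.
-/

section

variable {V : Type*} [DecidableEq V]

lemma card_filter_erase_notMem {B T : Finset V} {v : V} {p q : ℕ} (hBT : #(B ∩ T) = p)
    (hB : #B = p + q) (hvT : v ∈ T) : #{u ∈ B.erase v | u ∉ T} = q := by
  have hsdiff : {u ∈ B.erase v | u ∉ T} = B \ T := by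
    ext u
    simp only [mem_filter, mem_erase, mem_sdiff]
    exact ⟨fun h => ⟨h.1.2, h.2⟩, fun h => ⟨⟨fun huv => h.2 (huv ▸ hvT), h.1⟩, h.2⟩⟩
  have := card_sdiff_add_card_inter B T
  rw [hsdiff]
  omega

lemma sum_card_filter_mem_notMem {D : Finset (Finset V)} {B : Finset V} {v : V} {p q : ℕ}
    (hTB : ∀ T ∈ D, #(B ∩ T) = p) (hB : #B = p + q) :
    ∑ u ∈ B.erase v, #{T ∈ D | v ∈ T ∧ u ∉ T} = q * #{T ∈ D | v ∈ T} := by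
  simp only [card_filter, mul_sum]
  rw [sum_comm]
  refine sum_congr rfl fun T hT => ?_
  by_cases hvT : v ∈ T
  · simp only [hvT, true_and, if_true, mul_one, ← card_filter]
    exact card_filter_erase_notMem (hTB T hT) hB hvT
  · simp [hvT]

lemma symmDiff_inter_map_swap {N T : Finset V} {u v : V} (hvN : v ∉ N) (hvT : v ∈ T)
    (huT : u ∉ T) :
    symmDiff (T ∩ N) (T.map (Equiv.swap u v).toEmbedding ∩ N) = if u ∈ N then {u} else ∅ := by
  rw [← filter_eq']
  ext x
  simp only [mem_symmDiff, mem_inter, mem_map_equiv, Equiv.symm_swap, mem_filter]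
  rcases eq_or_ne x u with rfl | hxu
  · simp [hvT, huT]
  rcases eq_or_ne x v with rfl | hxv
  · simp [hvN]
  · simp [Equiv.swap_apply_of_ne_of_ne hxu hxv, hxu]

def IsSetLipschitz (N : Finset V) (K : ℝ) (h : Finset V → ℝ) : Prop :=
  ∀ A A' : Finset V, A ⊆ N → A' ⊆ N → |h A - h A'| ≤ K * #(symmDiff A A') / #N

lemma IsSetLipschitz.nonneg {N : Finset V} {K : ℝ} {h : Finset V → ℝ}
    (hh : IsSetLipschitz N K h) (hN : N.Nonempty) : 0 ≤ K := by
  obtain ⟨w, hw⟩ := hN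
  have := (abs_nonneg _).trans (hh {w} ∅ (singleton_subset_iff.2 hw) (empty_subset _))
  rwa [← bot_eq_empty, symmDiff_bot, card_singleton, Nat.cast_one, mul_one,
    le_div_iff₀ (by exact_mod_cast card_pos.2 ⟨w, hw⟩), zero_mul] at this

lemma IsSetLipschitz.abs_sub_map_swap_le {N T : Finset V} {K : ℝ} {h : Finset V → ℝ} {u v : V}
    (hh : IsSetLipschitz N K h) (hvN : v ∉ N) (hvT : v ∈ T) (huT : u ∉ T) :
    |h (T ∩ N) - h (T.map (Equiv.swap u v).toEmbedding ∩ N)| ≤ if u ∈ N then K / #N else 0 := by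
  have := hh (T ∩ N) (T.map (Equiv.swap u v).toEmbedding ∩ N) inter_subset_right
    inter_subset_right
  rw [symmDiff_inter_map_swap hvN hvT huT] at this
  split_ifs at this ⊢ <;> simpa using this

def SwapInvariantOn (D : Finset (Finset V)) (B : Finset V) : Prop :=
  ∀ a ∈ B, ∀ b ∈ B, ∀ T ∈ D, T.map (Equiv.swap a b).toEmbedding ∈ D

namespace SwapInvariantOn

variable {D : Finset (Finset V)} {B : Finset V} {a b u v w : V} {p q : ℕ}

lemma sum_map_swap {M : Type*} [AddCommMonoid M] (hD : SwapInvariantOn D B) (ha : a ∈ B)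
    (hb : b ∈ B) (g : Finset V → M) :
    ∑ T ∈ D, g (T.map (Equiv.swap a b).toEmbedding) = ∑ T ∈ D, g T :=
  sum_nbij' _ _ (hD a ha b hb) (hD a ha b hb) (fun T _ => by ext; simp [mem_map_equiv])
    (fun T _ => by ext; simp [mem_map_equiv]) fun _ _ => rfl

lemma card_filter_map_swap (hD : SwapInvariantOn D B) (ha : a ∈ B) (hb : b ∈ B)
    (P : Finset V → Prop) [DecidablePred P] :
    #{T ∈ D | P (T.map (Equiv.swap a b).toEmbedding)} = #{T ∈ D | P T} := by
  simp only [card_filter]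
  exact hD.sum_map_swap ha hb fun T => if P T then 1 else 0

lemma card_filter_mem_eq (hD : SwapInvariantOn D B) (ha : a ∈ B) (hb : b ∈ B) :
    #{T ∈ D | a ∈ T} = #{T ∈ D | b ∈ T} := by
  rw [← hD.card_filter_map_swap ha hb]
  simp [mem_map_equiv]

lemma card_mul_card_filter_mem (hD : SwapInvariantOn D B) (hTB : ∀ T ∈ D, #(B ∩ T) = p)
    (ha : a ∈ B) : #B * #{T ∈ D | a ∈ T} = p * #D := by
  rw [← sum_card_inter fun b hb => hD.card_filter_mem_eq hb ha, sum_congr rfl hTB, sum_const,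
    smul_eq_mul, mul_comm]

lemma card_filter_mem_notMem_eq (hD : SwapInvariantOn D B) (hu : u ∈ B.erase v)
    (hw : w ∈ B.erase v) :
    #{T ∈ D | v ∈ T ∧ u ∉ T} = #{T ∈ D | v ∈ T ∧ w ∉ T} := by
  rw [mem_erase] at hu hw
  rw [← hD.card_filter_map_swap hu.2 hw.2]
  simp [mem_map_equiv, Equiv.swap_apply_of_ne_of_ne hu.1.symm hw.1.symm]

lemma card_mul_card_filter_mem_notMem (hD : SwapInvariantOn D B)
    (hTB : ∀ T ∈ D, #(B ∩ T) = p) (hB : #B = p + q) (hv : v ∈ B) (hu : u ∈ B.erase v) :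
    #B * (#B - 1) * #{T ∈ D | v ∈ T ∧ u ∉ T} = p * q * #D := by
  have hpairs : (#B - 1) * #{T ∈ D | v ∈ T ∧ u ∉ T} = q * #{T ∈ D | v ∈ T} := by
    rw [← card_erase_of_mem hv, ← smul_eq_mul, ← sum_const,
      ← sum_card_filter_mem_notMem (p := p) hTB hB]
    exact sum_congr rfl fun w hw => hD.card_filter_mem_notMem_eq hu hw
  rw [mul_assoc, hpairs, mul_left_comm, hD.card_mul_card_filter_mem hTB hv]
  ring

lemma sum_sign_mul_eq {R : Type*} [CommRing R] (hD : SwapInvariantOn D B)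
    (hTB : ∀ T ∈ D, #(B ∩ T) = p) (hB : #B = p + q) (hv : v ∈ B) (g : Finset V → R) :
    ∑ T ∈ D, (if v ∈ T then (q : R) else -(p : R)) * g T =
      ∑ u ∈ B.erase v, ∑ T ∈ D with v ∈ T ∧ u ∉ T,
        (g T - g (T.map (Equiv.swap u v).toEmbedding)) := by
  have hswap : ∀ u ∈ B.erase v, ∑ T ∈ D with v ∈ T ∧ u ∉ T,
      g (T.map (Equiv.swap u v).toEmbedding) = ∑ T ∈ D with u ∈ T ∧ v ∉ T, g T := by
    intro u hu
    rw [sum_filter, sum_filter,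
      ← hD.sum_map_swap (mem_of_mem_erase hu) hv fun T => if u ∈ T ∧ v ∉ T then g T else 0]
    simp [mem_map_equiv]
  have hpointwise : ∀ T ∈ D, ∑ u ∈ B.erase v,
      ((if v ∈ T ∧ u ∉ T then g T else 0) - if u ∈ T ∧ v ∉ T then g T else 0) =
        (if v ∈ T then (q : R) else -(p : R)) * g T := by
    intro T hT
    by_cases hvT : v ∈ T
    · simp [hvT, sum_ite, card_filter_erase_notMem (hTB T hT) hB hvT]
    · simp [hvT, hTB T hT]
  calc _ = ∑ T ∈ D, ∑ u ∈ B.erase v,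
        ((if v ∈ T ∧ u ∉ T then g T else 0) - if u ∈ T ∧ v ∉ T then g T else 0) :=
        (sum_congr rfl hpointwise).symm
    _ = _ := by
      rw [sum_comm]
      refine sum_congr rfl fun u hu => ?_
      rw [sum_sub_distrib, sum_sub_distrib, hswap u hu, sum_filter, sum_filter]

lemma abs_sum_sign_mul_le (hD : SwapInvariantOn D B) (hTB : ∀ T ∈ D, #(B ∩ T) = p)
    (hB : #B = p + q) (hv : v ∈ B) (g : Finset V → ℝ) (L : V → ℝ)
    (hL : ∀ u ∈ B.erase v, ∀ T ∈ D, v ∈ T → u ∉ T →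
      |g T - g (T.map (Equiv.swap u v).toEmbedding)| ≤ L u) :
    (#B : ℝ) * (#B - 1) * |∑ T ∈ D, (if v ∈ T then (q : ℝ) else -(p : ℝ)) * g T| ≤
      p * q * #D * ∑ u ∈ B.erase v, L u := by
  have hB1 : 1 ≤ #B := card_pos.2 ⟨v, hv⟩
  have hpairs : ∀ u ∈ B.erase v,
      (#B : ℝ) * (#B - 1) * #{T ∈ D | v ∈ T ∧ u ∉ T} = p * q * #D := fun u hu => by
    rw [← Nat.cast_one, ← Nat.cast_sub hB1]
    exact_mod_cast hD.card_mul_card_filter_mem_notMem hTB hB hv hu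
  have hB1' : (0 : ℝ) ≤ #B - 1 := by rwa [sub_nonneg, Nat.one_le_cast]
  rw [hD.sum_sign_mul_eq hTB hB hv, mul_sum]
  calc _ ≤ (#B : ℝ) * (#B - 1) * ∑ u ∈ B.erase v, #{T ∈ D | v ∈ T ∧ u ∉ T} * L u := by
        refine mul_le_mul_of_nonneg_left ((abs_sum_le_sum_abs _ _).trans (sum_le_sum ?_))
          (mul_nonneg (Nat.cast_nonneg _) hB1')
        intro u hu
        refine (abs_sum_le_sum_abs _ _).trans ?_
        rw [← nsmul_eq_mul]
        exact sum_le_card_nsmul _ _ _ fun T hT => by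
          rw [mem_filter] at hT; exact hL u hu T hT.1 hT.2.1 hT.2.2
    _ = _ := by
        rw [mul_sum]
        exact sum_congr rfl fun u hu => by rw [← mul_assoc, hpairs u hu]

lemma abs_sum_sign_mul_le_of_isSetLipschitz (hD : SwapInvariantOn D B)
    (hTB : ∀ T ∈ D, #(B ∩ T) = p) (hB : #B = p + q) (hv : v ∈ B) {N : Finset V} (hvN : v ∉ N)
    {K : ℝ} {h : Finset V → ℝ} (hh : IsSetLipschitz N K h) :
    (#B : ℝ) * (#B - 1) * |∑ T ∈ D, (if v ∈ T then (q : ℝ) else -(p : ℝ)) * h (T ∩ N)| ≤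
      p * q * #D * (#(B ∩ N) / #N * K) := by
  refine (hD.abs_sum_sign_mul_le hTB hB hv _ (fun u => if u ∈ N then K / #N else 0)
    fun u _ T _ hvT huT => hh.abs_sub_map_swap_le hvN hvT huT).trans_eq ?_
  rw [← sum_filter, sum_const, nsmul_eq_mul, filter_mem_eq_inter, erase_inter,
    erase_eq_of_notMem fun hv' => hvN (mem_of_mem_inter_right hv'), mul_div_assoc']
  ring

end SwapInvariantOn

section Blocks

variable [Fintype V] {ι : Type*} [DecidableEq ι] (blk : V → ι) {D : Finset (Finset V)} {p : ℕ}

lemma swapInvariantOn_block (hD : ∀ T, T ∈ D ↔ ∀ i, #{x ∈ T | blk x = i} = p) (v : V) :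
    SwapInvariantOn D {u | blk u = blk v} := by
  intro a ha b hb T hT
  have hswap : ∀ x, blk (Equiv.swap a b x) = blk x := fun x => by
    simp only [mem_filter, mem_univ, true_and] at ha hb
    rcases eq_or_ne x a with rfl | hxa
    · simp [ha, hb]
    rcases eq_or_ne x b with rfl | hxb
    · simp [ha, hb]
    · rw [Equiv.swap_apply_of_ne_of_ne hxa hxb]
  rw [hD] at hT ⊢
  intro i
  rw [filter_map, card_map, ← hT i]
  simp [hswap]

lemma card_block_inter_eq (hD : ∀ T, T ∈ D ↔ ∀ i, #{x ∈ T | blk x = i} = p) (v : V) :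
    ∀ T ∈ D, #(({u | blk u = blk v} : Finset V) ∩ T) = p := fun T hT => by
  rw [inter_comm, inter_filter, inter_univ]
  exact (hD T).1 hT (blk v)

end Blocks

end

theorem stmt1_general
    {V : Type*} [Fintype V] [DecidableEq V]
    (G : SimpleGraph V) [DecidableRel G.Adj]
    (p q r n : ℕ) (hp : 1 ≤ p) (hq : 1 ≤ q) (hr : r = p + q)
    (hNoIso : ∀ v : V, 0 < G.degree v)
    (blk : V → Fin n)
    (hblk : ∀ i : Fin n, (univ.filter (fun v => blk v = i)).card = r)
    (K : V → ℝ) (f : V → Finset V → ℝ)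
    (hLip : ∀ v : V, ∀ A B : Finset V,
      A ⊆ G.neighborFinset v → B ⊆ G.neighborFinset v →
      |f v A - f v B| ≤ K v * (symmDiff A B).card / (G.degree v : ℝ)) :
    let D : Finset (Finset V) :=
      univ.filter (fun T : Finset V =>
        ∀ i : Fin n, (T.filter (fun v => blk v = i)).card = p)
    let xi : Finset V → ℝ := fun T =>
      (1 / ((p : ℝ) * q * n)) *
        ∑ v, (if v ∈ T then (q : ℝ) else -(p : ℝ)) * f v (T ∩ G.neighborFinset v)
    |(∑ T ∈ D, xi T) / (D.card : ℝ)| ≤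
      (1 / ((n : ℝ) * r * (r - 1))) *
        ∑ v, (((univ.filter (fun u => blk u = blk v)) ∩ G.neighborFinset v).card
            / (G.degree v : ℝ)) * K v := by
  intro D xi
  simp only [← G.card_neighborFinset_eq_degree] at hNoIso hLip ⊢
  set c : V → ℝ := fun v =>
    #(({u | blk u = blk v} : Finset V) ∩ G.neighborFinset v) / #(G.neighborFinset v) * K v
  have hDmem : ∀ T, T ∈ D ↔ ∀ i, #{x ∈ T | blk x = i} = p := by simp [D]
  have hrr : (0 : ℝ) < r * (r - 1) := by
    have : (2 : ℝ) ≤ r := by exact_mod_cast (show 2 ≤ r by omega)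
    nlinarith
  have hvertex : ∀ v, |∑ T ∈ D, (if v ∈ T then (q : ℝ) else -(p : ℝ)) *
      f v (T ∩ G.neighborFinset v)| ≤ p * q * #D * c v / (r * (r - 1)) := fun v => by
    rw [le_div_iff₀' hrr, ← hblk (blk v)]
    exact (swapInvariantOn_block blk hDmem v).abs_sum_sign_mul_le_of_isSetLipschitz
      (card_block_inter_eq blk hDmem v) ((hblk _).trans hr) (by simp)
      (G.notMem_neighborFinset_self v) (hLip v)
  rw [abs_div, Nat.abs_cast]
  refine div_le_of_le_mul₀ (Nat.cast_nonneg _) (mul_nonneg ?_ (sum_nonneg fun v _ => ?_)) ?_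
  · rw [one_div_nonneg, mul_assoc]; exact mul_nonneg (Nat.cast_nonneg _) hrr.le
  · exact mul_nonneg (by positivity) (IsSetLipschitz.nonneg (hLip v) (card_pos.1 (hNoIso v)))
  calc _ = 1 / ((p : ℝ) * q * n) * |∑ v, ∑ T ∈ D,
        (if v ∈ T then (q : ℝ) else -(p : ℝ)) * f v (T ∩ G.neighborFinset v)| := by
        simp only [xi, ← mul_sum]
        rw [sum_comm, abs_mul, abs_of_nonneg (by positivity)]
    _ ≤ 1 / ((p : ℝ) * q * n) * ∑ v, p * q * #D * c v / (r * (r - 1)) := by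
        gcongr
        exact (abs_sum_le_sum_abs _ _).trans (sum_le_sum fun v _ => hvertex v)
    _ = _ := by
        rw [← sum_div, ← mul_sum]
        field_simp

/-- for a fixed partition `P` of `V(G)` into `n` blocks of size `r`
(encoded by `blk : V → Fin n`), with treatment assigning independently a
uniformly random `p`-subset of each block (equivalently, `T` uniform over all
subsets meeting every block in exactly `p` elements), if each `f_v` is
`K_v`-Lipschitz then
`|E[ξ]| ≤ (1/(n r (r−1))) Σ_v (|P_v ∩ N(v)|/d(v)) K_v`. -/
theorem stmt1
    {V : Type*} [Fintype V] [DecidableEq V]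
    (G : SimpleGraph V) [DecidableRel G.Adj]
    (p q r n : ℕ) (hp : 1 ≤ p) (hq : 1 ≤ q) (hr : r = p + q) (hn : 1 ≤ n)
    (hcard : Fintype.card V = r * n)
    (hNoIso : ∀ v : V, 0 < G.degree v)
    (blk : V → Fin n)
    (hblk : ∀ i : Fin n, (univ.filter (fun v => blk v = i)).card = r)
    (K : V → ℝ) (f : V → Finset V → ℝ) (hf0 : ∀ v, f v ∅ = 0)
    (hLip : ∀ v : V, ∀ A B : Finset V,
      A ⊆ G.neighborFinset v → B ⊆ G.neighborFinset v →
      |f v A - f v B| ≤ K v * (symmDiff A B).card / (G.degree v : ℝ)) :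
    let D : Finset (Finset V) :=
      univ.filter (fun T : Finset V =>
        ∀ i : Fin n, (T.filter (fun v => blk v = i)).card = p)
    let xi : Finset V → ℝ := fun T =>
      (1 / ((p : ℝ) * q * n)) *
        ∑ v, (if v ∈ T then (q : ℝ) else -(p : ℝ)) * f v (T ∩ G.neighborFinset v)
    |(∑ T ∈ D, xi T) / (D.card : ℝ)| ≤
      (1 / ((n : ℝ) * r * (r - 1))) *
        ∑ v, (((univ.filter (fun u => blk u = blk v)) ∩ G.neighborFinset v).card
            / (G.degree v : ℝ)) * K v :=
  stmt1_general G p q r n hp hq hr hNoIso blk hblk K f hLip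
end

section
/- If every block S_i of the fixed partition P is an independent set in G (i.e., no edge of G has both endpoints in the same block), and treatment is assigned by treating a uniformly random p-subset of each block independently, then the Neymanian estimator is unbiased: E_T[t̂_Neyman] = t̄. -/
/-!
The transposition of two vertices `v, w` of one block maps the design to itself and fixes every
vertex outside the block, in particular (blocks being independent) every neighbour of `v`. So
`∑_{T ∋ v} g (T ∩ N(v))` does not depend on the choice of `v` in its block, and averaging over the
block, each `T` containing exactly `p` of its `r` vertices, gives
`r · ∑_{T ∋ v} g (T ∩ N(v)) = p · ∑_T g (T ∩ N(v))`.
As `Z_T(v) = r · 1[v ∈ T] - p`, the baseline and interference terms of `y_v` therefore cancel in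
`∑_T Z_T(v) y_v`, leaving `q t_v · #{T ∋ v} = p q t_v · #D / r`.
-/

open Finset

section BlockedTreatments

variable {V ι : Type*} [Fintype V] [Fintype ι] [DecidableEq ι]

/-- The support of `T_{B,P}`; the uniform distribution on it is the blocked design. -/
def blockedTreatments (blk : V → ι) (p : ℕ) : Finset (Finset V) :=
  univ.filter fun T => ∀ i, (T.filter (fun v => blk v = i)).card = p

variable {blk : V → ι} {p : ℕ}

theorem mem_blockedTreatments {T : Finset V} :
    T ∈ blockedTreatments blk p ↔ ∀ i, (T.filter (fun v => blk v = i)).card = p := by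
  simp [blockedTreatments]

theorem map_mem_blockedTreatments_iff {σ : Equiv.Perm V} (hσ : ∀ v, blk (σ v) = blk v)
    {T : Finset V} :
    T.map σ.toEmbedding ∈ blockedTreatments blk p ↔ T ∈ blockedTreatments blk p := by
  simp only [mem_blockedTreatments, filter_map, card_map, Function.comp_def,
    Equiv.coe_toEmbedding, hσ]

theorem blockedTreatments_nonempty (h : ∀ i, p ≤ (univ.filter (fun v => blk v = i)).card) :
    (blockedTreatments blk p).Nonempty := by
  classical
  choose s hs hcard using fun i => exists_subset_card_eq (h i)
  have hblk : ∀ {i v}, v ∈ s i → blk v = i := fun hv => (mem_filter.1 (hs _ hv)).2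
  refine ⟨univ.filter fun v => v ∈ s (blk v), mem_blockedTreatments.2 fun i => ?_⟩
  convert hcard i using 2
  ext v
  simp only [mem_filter, mem_univ, true_and]
  exact ⟨fun ⟨hv, hi⟩ => hi ▸ hv, fun hv => ⟨(hblk hv).symm ▸ hv, hblk hv⟩⟩

variable [DecidableEq V]

theorem sum_filter_mem_eq_of_blk_eq {v w : V} (hvw : blk v = blk w) {C : Finset V}
    (hC : ∀ c ∈ C, blk c ≠ blk v) (g : Finset V → ℝ) :
    ∑ T ∈ (blockedTreatments blk p).filter (v ∈ ·), g (T ∩ C) =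
      ∑ T ∈ (blockedTreatments blk p).filter (w ∈ ·), g (T ∩ C) := by
  have hσ : ∀ u, blk (Equiv.swap v w u) = blk u := fun u => by
    rcases eq_or_ne u v with rfl | huv
    · simp [hvw]
    rcases eq_or_ne u w with rfl | huw
    · simp [hvw]
    · rw [Equiv.swap_apply_of_ne_of_ne huv huw]
  have hfix : ∀ u ∈ C, Equiv.swap v w u = u := fun u hu =>
    Equiv.swap_apply_of_ne_of_ne (by rintro rfl; exact hC _ hu rfl)
      (by rintro rfl; exact hC _ hu hvw.symm)
  refine sum_equiv (Equiv.swap v w).finsetCongr (fun T => ?_) (fun T _ => congrArg g ?_)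
  · simp [map_mem_blockedTreatments_iff hσ]
  · ext u
    by_cases hu : u ∈ C <;> simp [hu, hfix]

theorem card_block_mul_sum_filter_mem (v : V) {C : Finset V} (hC : ∀ c ∈ C, blk c ≠ blk v)
    (g : Finset V → ℝ) :
    ((univ.filter (fun w => blk w = blk v)).card : ℝ) *
        ∑ T ∈ (blockedTreatments blk p).filter (v ∈ ·), g (T ∩ C) =
      p * ∑ T ∈ blockedTreatments blk p, g (T ∩ C) := by
  set B := univ.filter (fun w => blk w = blk v)
  have hBT : ∀ T ∈ blockedTreatments blk p, (B.filter (· ∈ T)).card = p := fun T hT => by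
    rw [← mem_blockedTreatments.1 hT (blk v), filter_filter]
    congr 1; ext w; simp [and_comm]
  calc (B.card : ℝ) * ∑ T ∈ (blockedTreatments blk p).filter (v ∈ ·), g (T ∩ C)
      = ∑ w ∈ B, ∑ T ∈ (blockedTreatments blk p).filter (w ∈ ·), g (T ∩ C) := by
        rw [← nsmul_eq_mul, ← sum_const]
        refine sum_congr rfl fun w hw => sum_filter_mem_eq_of_blk_eq (mem_filter.1 hw).2.symm hC g
    _ = ∑ T ∈ blockedTreatments blk p, (B.filter (· ∈ T)).card * g (T ∩ C) := by
        simp_rw [sum_filter, sum_comm (s := B), ← sum_filter, sum_const, nsmul_eq_mul]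
    _ = p * ∑ T ∈ blockedTreatments blk p, g (T ∩ C) := by
        rw [mul_sum]
        exact sum_congr rfl fun T hT => by rw [hBT T hT]

theorem add_mul_sum_neyman_contribution {q : ℕ} (v : V)
    (hB : (univ.filter (fun w => blk w = blk v)).card = p + q) {C : Finset V}
    (hC : ∀ c ∈ C, blk c ≠ blk v) (x t : ℝ) (g : Finset V → ℝ) :
    ((p : ℝ) + q) * ∑ T ∈ blockedTreatments blk p,
        (if v ∈ T then (q : ℝ) else -(p : ℝ)) * (x + (if v ∈ T then t else 0) + g (T ∩ C)) =
      p * q * (blockedTreatments blk p).card * t := by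
  set D := blockedTreatments blk p
  have hsplit : ∑ T ∈ D, (if v ∈ T then (q : ℝ) else -(p : ℝ)) *
        (x + (if v ∈ T then t else 0) + g (T ∩ C)) =
      (p + q) * ∑ T ∈ D.filter (v ∈ ·), (x + g (T ∩ C)) + q * t * (D.filter (v ∈ ·)).card -
        p * ∑ T ∈ D, (x + g (T ∩ C)) := by
    calc _ = ∑ T ∈ D, ((if v ∈ T then (p + q) * (x + g (T ∩ C)) + q * t else 0) -
            p * (x + g (T ∩ C))) :=
          sum_congr rfl fun T _ => by split_ifs <;> ring
      _ = _ := by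
          rw [sum_sub_distrib, ← sum_filter, sum_add_distrib, sum_const, nsmul_eq_mul, mul_sum,
            mul_sum]
          ring
  have hsum := card_block_mul_sum_filter_mem v hC (p := p) (fun A => x + g A)
  have hcard := card_block_mul_sum_filter_mem v hC (p := p) (fun _ => 1)
  simp only [hB, sum_const, nsmul_eq_mul, mul_one, Nat.cast_add] at hsum hcard
  rw [hsplit]
  linear_combination (↑p + ↑q) * hsum + q * t * hcard

end BlockedTreatments

theorem stmt2_general
    {V : Type*} [Fintype V] [DecidableEq V]
    (G : SimpleGraph V) [DecidableRel G.Adj]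
    (p q r n : ℕ) (hp : 1 ≤ p) (hq : 1 ≤ q) (hr : r = p + q)
    (blk : V → Fin n)
    (hblk : ∀ i : Fin n, (univ.filter (fun v => blk v = i)).card = r)
    (hindep : ∀ v v' : V, blk v = blk v' → ¬ G.Adj v v')
    (x t : V → ℝ) (f : V → Finset V → ℝ) :
    let D : Finset (Finset V) :=
      univ.filter (fun T : Finset V =>
        ∀ i : Fin n, (T.filter (fun v => blk v = i)).card = p)
    let tNeyman : Finset V → ℝ := fun T =>
      (1 / ((p : ℝ) * q * n)) *
        ∑ v, (if v ∈ T then (q : ℝ) else -(p : ℝ)) *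
          (x v + (if v ∈ T then t v else 0) + f v (T ∩ G.neighborFinset v))
    (∑ T ∈ D, tNeyman T) / (D.card : ℝ) = (1 / ((r : ℝ) * n)) * ∑ v, t v := by
  intro D tNeyman
  have hD : D = blockedTreatments blk p := by ext T; simp [D, mem_blockedTreatments]
  have hDcard : (D.card : ℝ) ≠ 0 := by
    rw [hD]
    exact Nat.cast_ne_zero.2
      (blockedTreatments_nonempty fun i => by rw [hblk i, hr]; omega).card_pos.ne'
  have hp0 : (p : ℝ) ≠ 0 := Nat.cast_ne_zero.2 (by omega)
  have hq0 : (q : ℝ) ≠ 0 := Nat.cast_ne_zero.2 (by omega)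
  have hvertex : ∀ v, ∑ T ∈ D, (if v ∈ T then (q : ℝ) else -(p : ℝ)) *
      (x v + (if v ∈ T then t v else 0) + f v (T ∩ G.neighborFinset v)) =
        p * q * D.card / (p + q) * t v := fun v => by
    rw [div_mul_eq_mul_div, eq_div_iff (by positivity), mul_comm, hD]
    exact add_mul_sum_neyman_contribution v (hr ▸ hblk (blk v))
      (fun c hc hcv => hindep v c hcv.symm ((G.mem_neighborFinset v c).1 hc)) (x v) (t v) (f v)
  simp only [tNeyman, ← mul_sum]
  rw [sum_comm, sum_congr rfl fun v _ => hvertex v, ← mul_sum, hr]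
  push_cast
  field_simp

/-- if every block of the fixed partition is an independent set of
`G`, and treatment treats a uniformly random `p`-subset of each block
independently (equivalently, `T` uniform over all subsets meeting every block in
exactly `p` elements), then the Neymanian estimator is unbiased:
`E_T[t̂_Neyman] = t̄`. -/
theorem stmt2
    {V : Type*} [Fintype V] [DecidableEq V]
    (G : SimpleGraph V) [DecidableRel G.Adj]
    (p q r n : ℕ) (hp : 1 ≤ p) (hq : 1 ≤ q) (hr : r = p + q) (hn : 1 ≤ n)
    (hcard : Fintype.card V = r * n)
    (hNoIso : ∀ v : V, 0 < G.degree v)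
    (blk : V → Fin n)
    (hblk : ∀ i : Fin n, (univ.filter (fun v => blk v = i)).card = r)
    (hindep : ∀ v v' : V, blk v = blk v' → ¬ G.Adj v v')
    (x t : V → ℝ) (K : V → ℝ) (f : V → Finset V → ℝ) (hf0 : ∀ v, f v ∅ = 0)
    (hLip : ∀ v : V, ∀ A B : Finset V,
      A ⊆ G.neighborFinset v → B ⊆ G.neighborFinset v →
      |f v A - f v B| ≤ K v * (symmDiff A B).card / (G.degree v : ℝ)) :
    let D : Finset (Finset V) :=
      univ.filter (fun T : Finset V =>
        ∀ i : Fin n, (T.filter (fun v => blk v = i)).card = p)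
    let tNeyman : Finset V → ℝ := fun T =>
      (1 / ((p : ℝ) * q * n)) *
        ∑ v, (if v ∈ T then (q : ℝ) else -(p : ℝ)) *
          (x v + (if v ∈ T then t v else 0) + f v (T ∩ G.neighborFinset v))
    (∑ T ∈ D, tNeyman T) / (D.card : ℝ) = (1 / ((r : ℝ) * n)) * ∑ v, t v :=
  stmt2_general G p q r n hp hq hr blk hblk hindep x t f
end

section
/- When the treatment group T is sampled uniformly at random from all pn-element subsets of V(G) (completely randomized design), |E_T[ξ]| ≤ K̄/(rn − 1), where K̄ = (1/(rn)) Σ_v K_v. -/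
/-!
Write `N = rn`, `m = pn` and `g T = f_v (T ∩ N(v))`. Up to the factor `n`, the contribution of a
vertex `v` to `E_T[ξ]` is `(N - m) Σ_{T ∋ v} g T - m Σ_{T ∌ v} g T`. Double counting the pairs
`(T, u)` with `v ∈ T`, `u ∉ T` through the exchange `T ↦ T - v + u` turns this into
`Σ_{(T, u)} (g T - g (T - v + u))`. As `v ∉ N(v)`, an exchange moves `T ∩ N(v)` only when
`u ∈ N(v)`, and then by one element, so each term is at most `K_v / d(v) · [u ∈ N(v)]`; there are
`d(v) · C(N - 2, m - 1)` pairs with `u ∈ N(v)`. Summing over `v` and dividing by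
`C(N, m) = N (N - 1) C(N - 2, m - 1) / (m (N - m))` gives the bound.
-/

open Finset

theorem Nat.succ_mul_sub_succ_mul_choose (N m : ℕ) :
    (m + 1) * (N - (m + 1)) * N.choose (m + 1) = N * (N - 1) * (N - 2).choose m := by
  match N with
  | 0 => simp
  | 1 => simp
  | n + 2 =>
    have h₁ : (n + 2) * (n + 1).choose m = (n + 2).choose (m + 1) * (m + 1) :=
      Nat.add_one_mul_choose_eq (n + 1) m
    have h₂ := Nat.choose_mul_succ_eq n m
    simp only [Nat.add_sub_cancel, show n + 2 - (m + 1) = n + 1 - m by omega]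
    calc (m + 1) * (n + 1 - m) * (n + 2).choose (m + 1)
        = (n + 1 - m) * ((n + 2).choose (m + 1) * (m + 1)) := by ring
      _ = (n + 2) * ((n + 1).choose m * (n + 1 - m)) := by rw [← h₁]; ring
      _ = (n + 2) * (n + 1) * n.choose m := by rw [← h₂]; ring

theorem Nat.cast_mul_sub_mul_choose {R : Type*} [CommRing R] {N m : ℕ} (hm : 0 < m)
    (hmN : m ≤ N) :
    (m : R) * (N - m) * N.choose m = N * (N - 1) * (N - 2).choose (m - 1) := by
  obtain ⟨k, rfl⟩ := Nat.exists_eq_add_one_of_ne_zero hm.ne'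
  have h := congrArg (Nat.cast (R := R)) (Nat.succ_mul_sub_succ_mul_choose N k)
  push_cast [Nat.cast_sub hmN, Nat.cast_sub (hm.trans_le hmN : 1 ≤ N)] at h
  simpa using h

section Exchange

variable {V : Type*} [Fintype V] [DecidableEq V]

omit [Fintype V] in
theorem Finset.insert_erase_exchange {T : Finset V} {u v : V} (hv : v ∈ T) (hu : u ∉ T) :
    #(insert u (T.erase v)) = #T ∧ u ∈ insert u (T.erase v) ∧ v ∉ insert u (T.erase v) ∧
      insert v ((insert u (T.erase v)).erase u) = T := by
  have huv : u ≠ v := by rintro rfl; exact hu hv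
  have hu' : u ∉ T.erase v := fun h => hu (mem_of_mem_erase h)
  refine ⟨?_, mem_insert_self _ _, by simp [huv.symm], ?_⟩
  · rw [card_insert_of_notMem hu', card_erase_add_one hv]
  · rw [erase_insert hu', insert_erase hv]

theorem sum_sum_compl_exchange (m : ℕ) (v : V) (g : Finset V → ℝ) :
    ∑ T ∈ (powersetCard m univ).filter (v ∈ ·), ∑ u ∈ Tᶜ, g (insert u (T.erase v)) =
      m * ∑ S ∈ (powersetCard m univ).filter (v ∉ ·), g S := by
  have hS : ∀ S ∈ (powersetCard m univ).filter (v ∉ ·), ∑ _u ∈ S, g S = m * g S := by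
    intro S hS
    rw [sum_const, (mem_powersetCard_univ.mp (mem_filter.mp hS).1), nsmul_eq_mul]
  rw [mul_sum, ← sum_congr rfl hS, sum_sigma', sum_sigma']
  refine sum_nbij' (fun x => ⟨insert x.2 (x.1.erase v), x.2⟩)
    (fun x => ⟨insert v (x.1.erase x.2), x.2⟩) ?_ ?_ ?_ ?_ ?_
  all_goals
    rintro ⟨T, u⟩ h
    simp only [mem_sigma, mem_filter, mem_powersetCard_univ, mem_compl] at h
  · obtain ⟨hcard, hu', hv', -⟩ := insert_erase_exchange h.1.2 h.2
    simp_all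
  · obtain ⟨hcard, hv', hu', -⟩ := insert_erase_exchange h.2 h.1.2
    simp_all
  · dsimp only; rw [(insert_erase_exchange h.1.2 h.2).2.2.2]
  · dsimp only; rw [(insert_erase_exchange h.2 h.1.2).2.2.2]
  · rfl

theorem card_sub_mul_sum_sub_mul_sum_eq (m : ℕ) (v : V) (g : Finset V → ℝ) :
    ((Fintype.card V - m : ℕ) : ℝ) * ∑ T ∈ (powersetCard m univ).filter (v ∈ ·), g T
        - m * ∑ S ∈ (powersetCard m univ).filter (v ∉ ·), g S =
      ∑ T ∈ (powersetCard m univ).filter (v ∈ ·), ∑ u ∈ Tᶜ,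
        (g T - g (insert u (T.erase v))) := by
  simp only [sum_sub_distrib, sum_sum_compl_exchange, sum_const, card_compl, nsmul_eq_mul,
    mul_sum]
  congr 1
  refine sum_congr rfl fun T hT => ?_
  rw [mem_powersetCard_univ.mp (mem_filter.mp hT).1]

omit [Fintype V] in
theorem symmDiff_inter_insert_erase_inter {T s : Finset V} {u v : V} (hv : v ∉ s) (hu : u ∉ T) :
    symmDiff (T ∩ s) (insert u (T.erase v) ∩ s) = {u} ∩ s := by
  ext x
  by_cases hxu : x = u <;> by_cases hxv : x = v <;> simp_all [mem_symmDiff]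

theorem card_filter_mem_notMem_powersetCard {m : ℕ} (hm : 0 < m) {v w : V} (hvw : v ≠ w) :
    #((powersetCard m univ).filter (fun T => v ∈ T ∧ w ∉ T)) =
      (Fintype.card V - 2).choose (m - 1) := by
  have hcard : #((univ.erase v).erase w) = Fintype.card V - 2 := by
    rw [card_erase_of_mem (by simp [hvw.symm]), card_erase_of_mem (mem_univ v), card_univ]; rfl
  rw [← hcard, ← card_powersetCard]
  refine card_nbij' (fun T => T.erase v) (insert v) ?_ ?_ ?_ ?_
  · intro T hT
    simp only [coe_filter, Set.mem_ofPred_eq, mem_coe, mem_powersetCard, subset_univ,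
      true_and] at hT ⊢
    refine ⟨fun x hx => ?_, by rw [card_erase_of_mem hT.2.1, hT.1]⟩
    simp only [mem_erase] at hx ⊢
    exact ⟨by rintro rfl; exact hT.2.2 hx.2, hx.1, mem_univ x⟩
  · intro S hS
    simp only [coe_filter, Set.mem_ofPred_eq, mem_coe, mem_powersetCard, subset_univ,
      true_and] at hS ⊢
    have hvS : v ∉ S := fun h => by simpa using hS.1 h
    have hwS : w ∉ S := fun h => by simpa using hS.1 h
    refine ⟨by rw [card_insert_of_notMem hvS, hS.2]; omega, mem_insert_self _ _, ?_⟩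
    simp [hvw.symm, hwS]
  · intro T hT
    exact insert_erase (mem_filter.mp hT).2.1
  · intro S hS
    exact erase_insert fun h => by simpa using (mem_powersetCard.mp hS).1 h

theorem sum_card_sdiff_filter_mem {m : ℕ} (hm : 0 < m) {v : V} {s : Finset V} (hv : v ∉ s) :
    ∑ T ∈ (powersetCard m univ).filter (v ∈ ·), #(s \ T) =
      #s * (Fintype.card V - 2).choose (m - 1) := by
  simp only [sdiff_eq_filter, card_filter]
  rw [sum_comm, ← smul_eq_mul, ← sum_const]
  refine sum_congr rfl fun w hw => ?_
  rw [← card_filter, filter_filter]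
  exact card_filter_mem_notMem_powersetCard hm fun h => hv (h ▸ hw)

theorem abs_card_sub_mul_sum_sub_mul_sum_le {m : ℕ} (hm : 0 < m) {v : V} {s : Finset V}
    (hv : v ∉ s) {f : Finset V → ℝ} {c : ℝ}
    (hf : ∀ A B, A ⊆ s → B ⊆ s → |f A - f B| ≤ c * #(symmDiff A B)) :
    |((Fintype.card V - m : ℕ) : ℝ) * ∑ T ∈ (powersetCard m univ).filter (v ∈ ·), f (T ∩ s)
        - m * ∑ S ∈ (powersetCard m univ).filter (v ∉ ·), f (S ∩ s)| ≤
      c * (#s * (Fintype.card V - 2).choose (m - 1) : ℕ) := by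
  have hterm : ∀ T u, u ∉ T →
      |f (T ∩ s) - f (insert u (T.erase v) ∩ s)| ≤ c * #({u} ∩ s) := fun T u hu => by
    simpa only [symmDiff_inter_insert_erase_inter hv hu] using
      hf (T ∩ s) (insert u (T.erase v) ∩ s) inter_subset_right inter_subset_right
  have hinner : ∀ T : Finset V, ∑ u ∈ Tᶜ, #({u} ∩ s) = #(s \ T) := fun T => by
    simp only [singleton_inter, apply_ite card, card_singleton, card_empty, ← card_filter]
    congr 1
    ext
    simp [and_comm]
  rw [card_sub_mul_sum_sub_mul_sum_eq m v (fun T => f (T ∩ s)),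
    ← sum_card_sdiff_filter_mem hm hv]
  calc _ ≤ ∑ T ∈ (powersetCard m univ).filter (v ∈ ·), ∑ u ∈ Tᶜ,
          |f (T ∩ s) - f (insert u (T.erase v) ∩ s)| :=
        (abs_sum_le_sum_abs _ _).trans (sum_le_sum fun T _ => abs_sum_le_sum_abs _ _)
    _ ≤ ∑ T ∈ (powersetCard m univ).filter (v ∈ ·), ∑ u ∈ Tᶜ, c * #({u} ∩ s) :=
        sum_le_sum fun T _ => sum_le_sum fun u hu => hterm T u (mem_compl.mp hu)
    _ = _ := by simp only [← mul_sum, ← hinner]; push_cast; rfl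

theorem mul_abs_sum_ite_mul_le {p q n : ℕ} (hpn : 0 < p * n)
    (hcard : Fintype.card V = (p + q) * n) {v : V} {s : Finset V} (hv : v ∉ s)
    {f : Finset V → ℝ} {c : ℝ} (hf : ∀ A B, A ⊆ s → B ⊆ s → |f A - f B| ≤ c * #(symmDiff A B)) :
    n * |∑ T ∈ powersetCard (p * n) univ, (if v ∈ T then (q : ℝ) else -p) * f (T ∩ s)| ≤
      c * (#s * (Fintype.card V - 2).choose (p * n - 1) : ℕ) := by
  have hqn : Fintype.card V - p * n = q * n := by rw [hcard, add_mul]; omega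
  convert abs_card_sub_mul_sum_sub_mul_sum_le hpn hv hf using 1
  rw [← abs_of_nonneg (Nat.cast_nonneg (α := ℝ) n), ← abs_mul, hqn]
  congr 1
  simp only [ite_mul, sum_ite, neg_mul, sum_neg_distrib, ← mul_sum]
  push_cast
  ring

end Exchange

theorem SimpleGraph.mul_abs_sum_sum_ite_mul_le {V : Type*} [Fintype V] [DecidableEq V]
    (G : SimpleGraph V) [DecidableRel G.Adj] {p q n : ℕ} (hpn : 0 < p * n)
    (hcard : Fintype.card V = (p + q) * n) (hdeg : ∀ v, 0 < G.degree v) {K : V → ℝ}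
    {f : V → Finset V → ℝ}
    (hf : ∀ v A B, A ⊆ G.neighborFinset v → B ⊆ G.neighborFinset v →
      |f v A - f v B| ≤ K v * #(symmDiff A B) / G.degree v) :
    n * |∑ v, ∑ T ∈ powersetCard (p * n) univ,
        (if v ∈ T then (q : ℝ) else -p) * f v (T ∩ G.neighborFinset v)| ≤
      (∑ v, K v) * ((Fintype.card V - 2).choose (p * n - 1) : ℕ) := by
  have hvertex (v : V) : n * |∑ T ∈ powersetCard (p * n) univ,
      (if v ∈ T then (q : ℝ) else -p) * f v (T ∩ G.neighborFinset v)| ≤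
      K v * ((Fintype.card V - 2).choose (p * n - 1) : ℕ) := by
    have hd : (G.degree v : ℝ) ≠ 0 := (Nat.cast_pos.mpr (hdeg v)).ne'
    refine (mul_abs_sum_ite_mul_le hpn hcard (G.notMem_neighborFinset_self v)
      (c := K v / G.degree v) fun A B hA hB => (hf v A B hA hB).trans_eq (by ring)).trans_eq ?_
    rw [G.card_neighborFinset_eq_degree, Nat.cast_mul, ← mul_assoc, div_mul_cancel₀ _ hd]
  refine (mul_le_mul_of_nonneg_left (abs_sum_le_sum_abs _ _) (by positivity)).trans ?_
  rw [mul_sum, sum_mul]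
  exact sum_le_sum fun v _ => hvertex v

theorem stmt4_general
    {V : Type*} [Fintype V] [DecidableEq V]
    (G : SimpleGraph V) [DecidableRel G.Adj]
    (p q r n : ℕ) (hp : 1 ≤ p) (hq : 1 ≤ q) (hr : r = p + q) (hn : 1 ≤ n)
    (hcard : Fintype.card V = r * n)
    (hNoIso : ∀ v : V, 0 < G.degree v)
    (K : V → ℝ) (f : V → Finset V → ℝ)
    (hLip : ∀ v : V, ∀ A B : Finset V,
      A ⊆ G.neighborFinset v → B ⊆ G.neighborFinset v →
      |f v A - f v B| ≤ K v * (symmDiff A B).card / (G.degree v : ℝ)) :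
    let D : Finset (Finset V) := Finset.powersetCard (p * n) univ
    let xi : Finset V → ℝ := fun T =>
      (1 / ((p : ℝ) * q * n)) *
        ∑ v, (if v ∈ T then (q : ℝ) else -(p : ℝ)) * f v (T ∩ G.neighborFinset v)
    |(∑ T ∈ D, xi T) / (D.card : ℝ)| ≤
      ((1 / ((r : ℝ) * n)) * ∑ v, K v) / ((r : ℝ) * n - 1) := by
  intro D xi
  subst hr
  have hpn : 0 < p * n := by positivity
  have hrn : (2 : ℝ) ≤ (p + q) * n := by exact_mod_cast (by nlinarith : 2 ≤ (p + q) * n)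
  have hsum := G.mul_abs_sum_sum_ite_mul_le hpn hcard hNoIso hLip
  rw [hcard] at hsum
  set C : ℝ := ((((p + q) * n - 2).choose (p * n - 1) : ℕ) : ℝ)
  set M : ℝ := ((((p + q) * n).choose (p * n) : ℕ) : ℝ)
  set Y : ℝ := ∑ v, ∑ T ∈ D, (if v ∈ T then (q : ℝ) else -p) * f v (T ∩ G.neighborFinset v)
  have hM : 0 < M := Nat.cast_pos.mpr (Nat.choose_pos (by nlinarith))
  have hmean : (∑ T ∈ D, xi T) / #D = Y / (p * q * n * M) := by
    rw [show (#D : ℝ) = M by rw [card_powersetCard, card_univ, hcard]]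
    simp only [xi, Y, ← mul_sum]
    rw [sum_comm]
    field_simp
  have hbinom : (p * n : ℝ) * (q * n) * M = (p + q) * n * ((p + q) * n - 1) * C := by
    have h := Nat.cast_mul_sub_mul_choose (R := ℝ) hpn (by nlinarith : p * n ≤ (p + q) * n)
    push_cast at h
    linear_combination h
  have hpqnM : (0 : ℝ) < p * q * n * M := by positivity
  push_cast
  rw [hmean, abs_div, abs_of_pos hpqnM, one_div_mul_eq_div, div_div,
    div_le_div_iff₀ hpqnM (by nlinarith)]
  refine le_of_mul_le_mul_left ?_ (by positivity : (0 : ℝ) < n)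
  calc (n : ℝ) * (|Y| * ((p + q) * n * ((p + q) * n - 1)))
      = n * |Y| * ((p + q) * n * ((p + q) * n - 1)) := by ring
    _ ≤ (∑ v, K v) * C * ((p + q) * n * ((p + q) * n - 1)) := by gcongr; nlinarith
    _ = n * ((∑ v, K v) * (p * q * n * M)) := by linear_combination (-∑ v, K v) * hbinom

/-- under the completely randomized design (`T` uniform on all
`pn`-element subsets of `V(G)`), `|E_T[ξ]| ≤ K̄/(rn − 1)` where
`K̄ = (1/(rn)) Σ_v K_v`. -/
theorem stmt4
    {V : Type*} [Fintype V] [DecidableEq V]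
    (G : SimpleGraph V) [DecidableRel G.Adj]
    (p q r n : ℕ) (hp : 1 ≤ p) (hq : 1 ≤ q) (hr : r = p + q) (hn : 1 ≤ n)
    (hcard : Fintype.card V = r * n)
    (hNoIso : ∀ v : V, 0 < G.degree v)
    (K : V → ℝ) (f : V → Finset V → ℝ) (hf0 : ∀ v, f v ∅ = 0)
    (hLip : ∀ v : V, ∀ A B : Finset V,
      A ⊆ G.neighborFinset v → B ⊆ G.neighborFinset v →
      |f v A - f v B| ≤ K v * (symmDiff A B).card / (G.degree v : ℝ)) :
    let D : Finset (Finset V) := Finset.powersetCard (p * n) univ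
    let xi : Finset V → ℝ := fun T =>
      (1 / ((p : ℝ) * q * n)) *
        ∑ v, (if v ∈ T then (q : ℝ) else -(p : ℝ)) * f v (T ∩ G.neighborFinset v)
    |(∑ T ∈ D, xi T) / (D.card : ℝ)| ≤
      ((1 / ((r : ℝ) * n)) * ∑ v, K v) / ((r : ℝ) * n - 1) :=
  stmt4_general G p q r n hp hq hr hn hcard hNoIso K f hLip
end

section
/- Let H be a graph with |V(H)| > 1 and let G be the disjoint union of 2^{|V(H)|} copies of H, indexed by vectors ε ∈ {0,1}^{V(H)} (so V(G) = V(H) × {0,1}^{V(H)}, with (v,ε) adjacent to (w,ε') iff ε = ε' and vw ∈ E(H)). Then the set Q = {(v, ε) : ε_v = 1} is a perfect quasi-coloring of G, i.e., D_Q = 0. -/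
/-!
Flipping the coordinate `v` of `ε` in `(v, ε)` is an involution exchanging
`Q = {(v, ε) : ε v = true}` with its complement. It preserves the bidegree, because the
neighbours of `(v, ε)` are the `(w, ε)` with `w ≠ v`, whose membership in `Q` is read off
`ε w` and is untouched by flipping `ε v`. So `Q` and its complement have the same size and
their vertices pair off with equal bidegrees, and the signed measure `D_Q` cancels.
-/

open Finset Function

section Involution

variable {α : Type*} [Fintype α] [DecidableEq α] {Q : Finset α} {g : α → α}

theorem card_eq_half_of_involutive_swap (hg : Involutive g) (hgQ : ∀ a, g a ∈ Q ↔ a ∉ Q) :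
    Q.card = Fintype.card α / 2 := by
  have hcompl : Q.card = Qᶜ.card := card_equiv (hg.toPerm g) fun a => by simp [hgQ]
  rw [card_compl] at hcompl
  have := Q.card_le_univ
  omega

theorem sum_sign_mul_eq_zero_of_involutive_swap {R : Type*} [Ring R]
    (hg : Involutive g) (hgQ : ∀ a, g a ∈ Q ↔ a ∉ Q) (φ : α → R) (hφ : ∀ a, φ (g a) = φ a) :
    ∑ a, (if a ∈ Q then (1 : R) else -1) * φ a = 0 := by
  refine sum_ninvolution g (fun a => ?_) (fun a _ hfix => ?_) (fun a => mem_univ _) hg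
  · by_cases ha : a ∈ Q
    · simp [ha, hφ, (hgQ a).not_left.mpr ha]
    · simp [ha, hφ, (hgQ a).mpr ha]
  · simpa [hfix] using hgQ a

end Involution

section FlipOwnBit

variable {W : Type*} [DecidableEq W]

def flipOwnBit (a : W × (W → Bool)) : W × (W → Bool) :=
  (a.1, update a.2 a.1 (!a.2 a.1))

theorem flipOwnBit_involutive : Involutive (flipOwnBit (W := W)) := by
  rintro ⟨v, ε⟩
  simp [flipOwnBit]

theorem flipOwnBit_apply_self (a : W × (W → Bool)) :
    (flipOwnBit a).2 (flipOwnBit a).1 = !a.2 a.1 := by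
  simp [flipOwnBit]

end FlipOwnBit

section CubeCopies

variable {W : Type*} [Fintype W] [DecidableEq W] (H : SimpleGraph W) [DecidableRel H.Adj]

def cubeCopiesNeighborFinset (a : W × (W → Bool)) : Finset (W × (W → Bool)) :=
  univ.filter fun b => a.2 = b.2 ∧ H.Adj a.1 b.1

theorem card_cubeCopiesNeighborFinset_filter_ownBit (v : W) (ε : W → Bool) (b : Bool) :
    ((cubeCopiesNeighborFinset H (v, ε)).filter fun c => c.2 c.1 = b).card =
      (univ.filter fun w => H.Adj v w ∧ ε w = b).card := by
  refine card_nbij' Prod.fst (fun w => (w, ε)) ?_ ?_ ?_ ?_ <;>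
    simp +contextual [Set.MapsTo, Set.LeftInvOn, Set.RightInvOn, cubeCopiesNeighborFinset]

theorem filter_adj_update_eq (v : W) (ε : W → Bool) (x b : Bool) :
    (univ.filter fun w => H.Adj v w ∧ update ε v x w = b) =
      univ.filter fun w => H.Adj v w ∧ ε w = b :=
  filter_congr fun w _ => and_congr_right fun hvw => by
    rw [update_of_ne (H.ne_of_adj hvw).symm]

theorem card_cubeCopiesNeighborFinset_filter_ownBit_flipOwnBit (a : W × (W → Bool)) (b : Bool) :
    ((cubeCopiesNeighborFinset H (flipOwnBit a)).filter fun c => c.2 c.1 = b).card =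
      ((cubeCopiesNeighborFinset H a).filter fun c => c.2 c.1 = b).card := by
  obtain ⟨v, ε⟩ := a
  simp only [flipOwnBit, card_cubeCopiesNeighborFinset_filter_ownBit, filter_adj_update_eq]

end CubeCopies

theorem stmt6_general
    {W : Type*} [Fintype W] [DecidableEq W]
    (H : SimpleGraph W) [DecidableRel H.Adj] :
    let Nbr : W × (W → Bool) → Finset (W × (W → Bool)) := fun a =>
      univ.filter (fun b => a.2 = b.2 ∧ H.Adj a.1 b.1)
    let Q : Finset (W × (W → Bool)) := univ.filter (fun a => a.2 a.1 = true)
    let n : ℕ := Fintype.card (W × (W → Bool)) / 2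
    Q.card = n ∧
    (∀ u : ℕ × ℕ,
      (1 / (n : ℝ)) * ∑ a, (if a ∈ Q then (1 : ℝ) else -1) *
        (if ((Q ∩ Nbr a).card, (Nbr a \ Q).card) = u then 1 else 0) = 0) := by
  intro Nbr Q n
  have hQ : ∀ a, flipOwnBit a ∈ Q ↔ a ∉ Q := fun a => by
    simp [Q, flipOwnBit_apply_self]
  have hsplit : ∀ a, Q ∩ Nbr a = (Nbr a).filter (fun c => c.2 c.1 = true) ∧
      Nbr a \ Q = (Nbr a).filter (fun c => c.2 c.1 = false) := fun a => by
    constructor <;> ext c <;> simp [Q, and_comm]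
  refine ⟨card_eq_half_of_involutive_swap flipOwnBit_involutive hQ, fun u => ?_⟩
  rw [sum_sign_mul_eq_zero_of_involutive_swap flipOwnBit_involutive hQ _ fun a => ?_, mul_zero]
  simp only [hsplit]
  exact congrArg (if · = u then (1 : ℝ) else 0) <| Prod.ext
    (card_cubeCopiesNeighborFinset_filter_ownBit_flipOwnBit H a true)
    (card_cubeCopiesNeighborFinset_filter_ownBit_flipOwnBit H a false)

/-- let `H` be a graph with more than one vertex and let `G` be the
disjoint union of `2^{|V(H)|}` copies of `H`, with vertex set
`V(H) × {0,1}^{V(H)}` and `(v,ε)` adjacent to `(w,ε')` iff `ε = ε'` and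
`vw ∈ E(H)`. Then `Q = {(v,ε) : ε_v = 1}` is a perfect quasi-coloring of `G`:
it contains half the vertices and its bidegree measure `D_Q` vanishes. -/
theorem stmt6
    {W : Type*} [Fintype W] [DecidableEq W]
    (H : SimpleGraph W) [DecidableRel H.Adj]
    (hW : 1 < Fintype.card W) :
    let Nbr : W × (W → Bool) → Finset (W × (W → Bool)) := fun a =>
      univ.filter (fun b => a.2 = b.2 ∧ H.Adj a.1 b.1)
    let Q : Finset (W × (W → Bool)) := univ.filter (fun a => a.2 a.1 = true)
    let n : ℕ := Fintype.card (W × (W → Bool)) / 2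
    Q.card = n ∧
    (∀ u : ℕ × ℕ,
      (1 / (n : ℝ)) * ∑ a, (if a ∈ Q then (1 : ℝ) else -1) *
        (if ((Q ∩ Nbr a).card, (Nbr a \ Q).card) = u then 1 else 0) = 0) :=
  stmt6_general H
end

section
/- Let X_1, …, X_n be real random variables with finite variances such that for each index i there are at most κ indices j with X_i and X_j not independent. Then Var(Σ_{i=1}^n X_i) ≤ κ Σ_{i=1}^n Var(X_i). -/
/-!
Expand `Var(∑ Xᵢ) = ∑ᵢ ∑ⱼ Cov(Xᵢ, Xⱼ)`. Independent pairs contribute nothing, and every other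
covariance is at most `(Var Xᵢ + Var Xⱼ) / 2` because `Var(Xᵢ - Xⱼ) ≥ 0`. Dependence is a
symmetric relation, so each `Var Xᵢ` is charged once for every `j` it depends on, hence at
most `κ` times.
-/

open MeasureTheory ProbabilityTheory Finset

theorem sum_sum_le_mul_sum_of_symm {ι : Type*} [Fintype ι] {r : ι → ι → Prop}
    [DecidableRel r] (hr : ∀ i j, r i j → r j i) {κ : ℕ} (hκ : ∀ i, #{j | r i j} ≤ κ)
    {a : ι → ℝ} (ha : ∀ i, 0 ≤ a i) {c : ι → ι → ℝ} (hc_zero : ∀ i j, ¬ r i j → c i j = 0)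
    (hc_le : ∀ i j, c i j ≤ (a i + a j) / 2) :
    ∑ i, ∑ j, c i j ≤ κ * ∑ i, a i := by
  have hswap : ∑ i, ∑ j, (if r i j then a j else 0) = ∑ i, ∑ j, if r i j then a i else 0 := by
    rw [Finset.sum_comm]
    exact Fintype.sum_congr _ _ fun i ↦ Fintype.sum_congr _ _ fun j ↦ by
      simp only [show r j i ↔ r i j from ⟨hr j i, hr i j⟩]
  calc ∑ i, ∑ j, c i j
      ≤ ∑ i, ∑ j, ((if r i j then a i else 0) + (if r i j then a j else 0)) / 2 := by
        gcongr with i _ j _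
        split_ifs with h
        · exact hc_le i j
        · simp [hc_zero i j h]
    _ = ∑ i, ∑ j, if r i j then a i else 0 := by
        simp only [← Finset.sum_div, Finset.sum_add_distrib, hswap]
        ring
    _ = ∑ i, #{j | r i j} * a i := by
        simp [Finset.sum_ite]
    _ ≤ ∑ i, κ * a i := by
        gcongr with i
        · exact ha i
        · exact_mod_cast hκ i
    _ = κ * ∑ i, a i := (Finset.mul_sum ..).symm

theorem covariance_le_variance_add_variance_div_two {Ω : Type*} [MeasurableSpace Ω]
    {μ : Measure Ω} [IsFiniteMeasure μ] {X Y : Ω → ℝ} (hX : MemLp X 2 μ) (hY : MemLp Y 2 μ) :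
    cov[X, Y; μ] ≤ (Var[X; μ] + Var[Y; μ]) / 2 := by
  have := variance_nonneg (X - Y) μ
  rw [variance_sub hX hY] at this
  linarith

theorem stmt10_general
    {Ω : Type*} [MeasurableSpace Ω] (μ : Measure Ω) [IsProbabilityMeasure μ]
    (n κ : ℕ) (X : Fin n → Ω → ℝ)
    (hL2 : ∀ i, MeasureTheory.MemLp (X i) 2 μ)
    (hκ : ∀ i, ({j | ¬ ProbabilityTheory.IndepFun (X i) (X j) μ} : Set (Fin n)).ncard ≤ κ) :
    ProbabilityTheory.variance (fun ω => ∑ i, X i ω) μ ≤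
      (κ : ℝ) * ∑ i, ProbabilityTheory.variance (X i) μ := by
  classical
  rw [variance_fun_sum hL2]
  refine sum_sum_le_mul_sum_of_symm (r := fun i j ↦ ¬ IndepFun (X i) (X j) μ)
    (fun i j hij hji ↦ hij hji.symm) (fun i ↦ ?_) (fun i ↦ variance_nonneg _ _)
    (fun i j hij ↦ (not_not.mp hij).covariance_eq_zero (hL2 i) (hL2 j))
    (fun i j ↦ covariance_le_variance_add_variance_div_two (hL2 i) (hL2 j))
  simpa [Set.ncard_eq_toFinset_card'] using hκ i

/-- if `X_1,…,X_n` are square-integrable real random variables such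
that each `X_i` fails to be independent of at most `κ` of the `X_j`, then
`Var(Σ_i X_i) ≤ κ Σ_i Var(X_i)`. -/
theorem stmt10
    {Ω : Type*} [MeasurableSpace Ω] (μ : Measure Ω) [IsProbabilityMeasure μ]
    (n κ : ℕ) (X : Fin n → Ω → ℝ)
    (hmeas : ∀ i, Measurable (X i))
    (hL2 : ∀ i, MeasureTheory.MemLp (X i) 2 μ)
    (hκ : ∀ i, ({j | ¬ ProbabilityTheory.IndepFun (X i) (X j) μ} : Set (Fin n)).ncard ≤ κ) :
    ProbabilityTheory.variance (fun ω => ∑ i, X i ω) μ ≤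
      (κ : ℝ) * ∑ i, ProbabilityTheory.variance (X i) μ :=
  stmt10_general μ n κ X hL2 hκ
end

section
/- For p = q = 1, r = 2, choosing the treatment T uniformly at random between a perfect quasi-coloring Q and its complement V(G)\Q makes the Neymanian estimator exactly unbiased for the average direct treatment effect under any symmetric interference model: E_T[t̂_Neyman] = t̄. -/
open Finset

/-!
Replacing `T` by its complement flips every sign `Z_T(v)` and swaps the two coordinates of the
exposure `(|T ∩ N(v)|, |N(v) \ T|)`. So the estimates for `Q` and `Qᶜ` add up to `(1/n) ∑ t_v`
plus `(1/n) ∑ Z_Q(v) g(exposure_Q(v))` with `g(a, b) = f(a, b) - f(b, a)`. Splitting the last sum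
along the fibres of the exposure map makes it a linear combination of the coordinates of `D_Q`,
which all vanish for a perfect quasi-coloring.
-/

theorem Finset.mul_sum_mul_comp_eq_zero {ι β R : Type*} [Fintype ι] [DecidableEq β]
    [CommSemiring R] {c : R} {ε : ι → R} {p : ι → β}
    (h : ∀ u, c * ∑ i, ε i * (if p i = u then 1 else 0) = 0) (g : β → R) :
    c * ∑ i, ε i * g (p i) = 0 := by
  have hfiber : ∀ u, ∑ i with p i = u, ε i * g (p i) =
      g u * ∑ i, ε i * (if p i = u then 1 else 0) := by
    intro u
    simp only [mul_ite, mul_one, mul_zero, ← sum_filter, mul_sum]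
    exact sum_congr rfl fun i hi => by rw [(mem_filter.mp hi).2, mul_comm]
  rw [← sum_fiberwise_of_maps_to (fun i _ => mem_image_of_mem p (mem_univ i)), mul_sum]
  exact sum_eq_zero fun u _ => by rw [hfiber, mul_left_comm, h, mul_zero]

section Neyman

variable {V : Type*} [Fintype V] [DecidableEq V] (G : SimpleGraph V) [DecidableRel G.Adj]

def treatmentSign (T : Finset V) (v : V) : ℝ := if v ∈ T then 1 else -1

def exposure (T : Finset V) (v : V) : ℕ × ℕ :=
  ((T ∩ G.neighborFinset v).card, (G.neighborFinset v \ T).card)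

noncomputable def neymanEstimate (n : ℕ) (x t : V → ℝ) (f : ℕ × ℕ → ℝ) (T : Finset V) : ℝ :=
  (1 / (n : ℝ)) * ∑ v, treatmentSign T v *
    (x v + (if v ∈ T then t v else 0) + f (exposure G T v))

theorem treatmentSign_compl (T : Finset V) (v : V) :
    treatmentSign Tᶜ v = -treatmentSign T v := by
  by_cases hv : v ∈ T <;> simp [treatmentSign, hv]

theorem exposure_compl (T : Finset V) (v : V) : exposure G Tᶜ v = (exposure G T v).swap := by
  simp only [exposure, Prod.swap_prod_mk, inter_comm Tᶜ, ← sdiff_eq_inter_compl, sdiff_compl,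
    inf_eq_inter, inter_comm _ T]

theorem neymanEstimate_add_compl (n : ℕ) (x t : V → ℝ) (f : ℕ × ℕ → ℝ) (T : Finset V) :
    neymanEstimate G n x t f T + neymanEstimate G n x t f Tᶜ =
      1 / (n : ℝ) * ∑ v, t v +
        1 / (n : ℝ) * ∑ v, treatmentSign T v * (f (exposure G T v) - f (exposure G T v).swap) := by
  have hpoint : ∀ v, treatmentSign T v * (x v + (if v ∈ T then t v else 0) + f (exposure G T v)) +
      treatmentSign Tᶜ v * (x v + (if v ∈ Tᶜ then t v else 0) + f (exposure G Tᶜ v)) =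
      t v + treatmentSign T v * (f (exposure G T v) - f (exposure G T v).swap) := by
    intro v
    rw [treatmentSign_compl, exposure_compl]
    by_cases hv : v ∈ T <;> simp only [treatmentSign, hv, mem_compl, not_true_eq_false,
      not_false_eq_true, if_true, if_false] <;> ring
  simp only [neymanEstimate, ← mul_add, ← sum_add_distrib, hpoint]

end Neyman

theorem stmt17_general
    {V : Type*} [Fintype V] [DecidableEq V]
    (G : SimpleGraph V) [DecidableRel G.Adj]
    (n : ℕ)
    (Q : Finset V)
    (x t : V → ℝ) (f : ℕ × ℕ → ℝ)
    (hQperfect : ∀ u : ℕ × ℕ,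
      (1 / (n : ℝ)) * ∑ v, (if v ∈ Q then (1 : ℝ) else -1) *
        (if ((Q ∩ G.neighborFinset v).card, (G.neighborFinset v \ Q).card) = u
          then 1 else 0) = 0) :
    let tNeyman : Finset V → ℝ := fun T =>
      (1 / (n : ℝ)) * ∑ v, (if v ∈ T then (1 : ℝ) else -1) *
        (x v + (if v ∈ T then t v else 0) +
          f ((T ∩ G.neighborFinset v).card, (G.neighborFinset v \ T).card))
    (tNeyman Q + tNeyman Qᶜ) / 2 = (1 / ((2 : ℝ) * n)) * ∑ v, t v := by
  intro tNeyman
  have hcancel : 1 / (n : ℝ) *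
      ∑ v, treatmentSign Q v * (f (exposure G Q v) - f (exposure G Q v).swap) = 0 :=
    mul_sum_mul_comp_eq_zero hQperfect fun u => f u - f u.swap
  change (neymanEstimate G n x t f Q + neymanEstimate G n x t f Qᶜ) / 2 = _
  rw [neymanEstimate_add_compl, hcancel]
  ring

/-- for `p = q = 1`, `r = 2`, choosing the treatment uniformly at
random between a perfect quasi-coloring `Q` and its complement makes the
Neymanian estimator exactly unbiased under any symmetric interference model:
`(t̂_Neyman(Q) + t̂_Neyman(V\Q))/2 = t̄`. -/
theorem stmt17
    {V : Type*} [Fintype V] [DecidableEq V]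
    (G : SimpleGraph V) [DecidableRel G.Adj]
    (n : ℕ) (hn : 1 ≤ n) (hcard : Fintype.card V = 2 * n)
    (hNoIso : ∀ v : V, 0 < G.degree v)
    (Q : Finset V) (hQ : Q.card = n)
    (x t : V → ℝ) (f : ℕ × ℕ → ℝ)
    (hQperfect : ∀ u : ℕ × ℕ,
      (1 / (n : ℝ)) * ∑ v, (if v ∈ Q then (1 : ℝ) else -1) *
        (if ((Q ∩ G.neighborFinset v).card, (G.neighborFinset v \ Q).card) = u
          then 1 else 0) = 0) :
    let tNeyman : Finset V → ℝ := fun T =>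
      (1 / (n : ℝ)) * ∑ v, (if v ∈ T then (1 : ℝ) else -1) *
        (x v + (if v ∈ T then t v else 0) +
          f ((T ∩ G.neighborFinset v).card, (G.neighborFinset v \ T).card))
    (tNeyman Q + tNeyman Qᶜ) / 2 = (1 / ((2 : ℝ) * n)) * ∑ v, t v :=
  stmt17_general G n Q x t f hQperfect
end

section
/- For the partitioning-by-degree design T = T_{B,P*} (blocks of r vertices of consecutive rank in the degree ordering, with a uniform p-subset of each block treated independently), if the symmetric interference function f satisfies ‖f‖_{d_K} ≤ 1 then the bias satisfies |E_T[ξ]| ≤ min{r−1, d_min}(K_1 + K_2)/((r−1) d_min). -/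
/-!
Fix a vertex `v` in a block `P` of size `r = p + q` and write `f_v(T) = f(|T ∩ N(v)|, |N(v) \ T|)`.
The transposition of `v` and `u ∈ P` preserves the design and exchanges the designs with
`v ∈ T ∌ u` and those with `u ∈ T ∌ v`, so
`∑_T (q·[v ∈ T] - p·[v ∉ T]) f_v(T) = ∑_{u ∈ P} ∑_{v ∈ T ∌ u} (f_v(T) - f_v((v u) T))`.
The transposition changes `(|T ∩ N(v)|, |N(v) \ T|)` only if `u ∈ N(v)`, and then by `(+1, -1)`:
the degree is kept and the treated fraction moves by `1 / d(v)`, so each difference is at most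
`K₂ / d(v)`. By the same symmetry, each ordered pair of distinct vertices of `P` is split by
`|D| p q / (r (r - 1))` designs, and `P` holds at most `min(r - 1, d(v))` neighbours of `v`.
Finally `min(r - 1, d) / d` decreases in `d`, so `d(v)` may be replaced by `d_min`.
-/

open Finset Function

section Swap

variable {V : Type*} [DecidableEq V] {s T : Finset V} {a b : V}

lemma Finset.map_swap_eq_self (h : a ∈ s ↔ b ∈ s) : (Equiv.swap a b).finsetCongr s = s := by
  ext x
  rw [Equiv.finsetCongr_apply, mem_map_equiv, Equiv.symm_swap]
  rcases eq_or_ne x a with rfl | hxa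
  · rw [Equiv.swap_apply_left, h]
  rcases eq_or_ne x b with rfl | hxb
  · rw [Equiv.swap_apply_right, h]
  · rw [Equiv.swap_apply_of_ne_of_ne hxa hxb]

lemma Finset.map_swap_eq_insert_erase (ha : a ∈ T) (hb : b ∉ T) :
    (Equiv.swap a b).finsetCongr T = insert b (T.erase a) := by
  ext x
  rw [Equiv.finsetCongr_apply, mem_map_equiv, Equiv.symm_swap, mem_insert, mem_erase]
  rcases eq_or_ne x a with rfl | hxa
  · simp [Equiv.swap_apply_left, hb, ne_of_mem_of_not_mem ha hb]
  rcases eq_or_ne x b with rfl | hxb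
  · simp [ha]
  · simp [Equiv.swap_apply_of_ne_of_ne hxa hxb, hxa, hxb]

end Swap

lemma Finset.sum_sum_filter_eq_sum_card_filter_smul {α β M : Type*} [AddCommMonoid M]
    (s : Finset α) (t : Finset β) (R : α → β → Prop) [∀ a b, Decidable (R a b)] (φ : β → M) :
    ∑ a ∈ s, ∑ b ∈ t with R a b, φ b = ∑ b ∈ t, #{a ∈ s | R a b} • φ b := by
  simp_rw [sum_filter, card_filter, sum_smul, ite_smul, one_smul, zero_smul]
  exact sum_comm

section BlockDesigns

variable {V ι : Type*} [Fintype V] [DecidableEq V]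

open Classical in
noncomputable def blockDesigns (S : ι → Finset V) (p : ℕ) : Finset (Finset V) :=
  {T | ∀ i, #(T ∩ S i) = p}

variable {S : ι → Finset V} {p q : ℕ} {i : ι} {T : Finset V} {a b v : V}

@[simp]
lemma mem_blockDesigns : T ∈ blockDesigns S p ↔ ∀ i, #(T ∩ S i) = p := by
  simp [blockDesigns]

lemma map_swap_mem_blockDesigns_iff (hS : Pairwise (Disjoint on S)) (ha : a ∈ S i)
    (hb : b ∈ S i) : (Equiv.swap a b).finsetCongr T ∈ blockDesigns S p ↔ T ∈ blockDesigns S p := by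
  have hblock : ∀ j, (Equiv.swap a b).finsetCongr (S j) = S j := by
    intro j
    refine map_swap_eq_self ⟨fun haj => ?_, fun hbj => ?_⟩
    · obtain rfl : i = j := hS.eq (not_disjoint_iff.2 ⟨a, ha, haj⟩)
      exact hb
    · obtain rfl : i = j := hS.eq (not_disjoint_iff.2 ⟨b, hb, hbj⟩)
      exact ha
  simp_rw [mem_blockDesigns]
  refine forall_congr' fun j => ?_
  conv_lhs => rw [← hblock j]
  rw [Equiv.finsetCongr_apply, Equiv.finsetCongr_apply, ← map_inter, card_map]

lemma map_swap_filter_blockDesigns (hS : Pairwise (Disjoint on S)) (ha : a ∈ S i)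
    (hb : b ∈ S i) (x y : V) :
    {T ∈ blockDesigns S p | x ∈ T ∧ y ∉ T}.map (Equiv.swap a b).finsetCongr.toEmbedding =
      {T ∈ blockDesigns S p | Equiv.swap a b x ∈ T ∧ Equiv.swap a b y ∉ T} := by
  ext T
  rw [mem_map_equiv, mem_filter, mem_filter, Equiv.finsetCongr_symm, Equiv.symm_swap,
    map_swap_mem_blockDesigns_iff hS ha hb, Equiv.finsetCongr_apply, mem_map_equiv,
    mem_map_equiv, Equiv.symm_swap]

lemma card_filter_mem_not_mem_swap (hS : Pairwise (Disjoint on S)) (ha : a ∈ S i)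
    (hb : b ∈ S i) (x y : V) :
    #{T ∈ blockDesigns S p | Equiv.swap a b x ∈ T ∧ Equiv.swap a b y ∉ T} =
      #{T ∈ blockDesigns S p | x ∈ T ∧ y ∉ T} := by
  rw [← map_swap_filter_blockDesigns hS ha hb, card_map]

lemma card_filter_mem_not_mem_eq (hS : Pairwise (Disjoint on S)) {x y x' y' : V}
    (hx : x ∈ S i) (hy : y ∈ S i) (hx' : x' ∈ S i) (hy' : y' ∈ S i) (hxy : x ≠ y)
    (hxy' : x' ≠ y') :
    #{T ∈ blockDesigns S p | x ∈ T ∧ y ∉ T} = #{T ∈ blockDesigns S p | x' ∈ T ∧ y' ∉ T} := by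
  set y₁ := Equiv.swap x x' y
  have hy₁ : y₁ ∈ S i := map_swap_eq_self (iff_of_true hx hx') ▸ mem_map_equiv.2 (by
    rwa [Equiv.symm_swap, Equiv.swap_apply_self])
  have hx'y₁ : x' ≠ y₁ := by
    rw [← Equiv.swap_apply_left x x']
    exact (Equiv.injective _).ne hxy
  calc #{T ∈ blockDesigns S p | x ∈ T ∧ y ∉ T}
      = #{T ∈ blockDesigns S p | x' ∈ T ∧ y₁ ∉ T} := by
        rw [← card_filter_mem_not_mem_swap hS hx hx', Equiv.swap_apply_left]
    _ = #{T ∈ blockDesigns S p | x' ∈ T ∧ y' ∉ T} := by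
        rw [← card_filter_mem_not_mem_swap hS hy₁ hy', Equiv.swap_apply_left,
          Equiv.swap_apply_of_ne_of_ne hx'y₁ hxy']

lemma card_filter_mem_not_mem_mul (hS : Pairwise (Disjoint on S)) (hcard : #(S i) = p + q)
    {x y : V} (hx : x ∈ S i) (hy : y ∈ S i) (hxy : x ≠ y) :
    #{T ∈ blockDesigns S p | x ∈ T ∧ y ∉ T} * (#(S i) * (#(S i) - 1)) =
      #(blockDesigns S p) * (p * q) := by
  have hpairs : ∀ T ∈ blockDesigns S p, #{z ∈ (S i).offDiag | z.1 ∈ T ∧ z.2 ∉ T} = p * q := by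
    intro T hT
    have hin : #(S i ∩ T) = p := inter_comm T (S i) ▸ mem_blockDesigns.1 hT i
    have hout : #(S i \ T) = q := by have := card_sdiff_add_card_inter (S i) T; omega
    have : {z ∈ (S i).offDiag | z.1 ∈ T ∧ z.2 ∉ T} = (S i ∩ T) ×ˢ (S i \ T) := by
      ext ⟨z₁, z₂⟩
      simp only [mem_filter, mem_offDiag, mem_product, mem_inter, mem_sdiff]
      constructor
      · tauto
      · rintro ⟨⟨h₁, hT₁⟩, h₂, hT₂⟩
        exact ⟨⟨h₁, h₂, ne_of_mem_of_not_mem hT₁ hT₂⟩, hT₁, hT₂⟩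
    rw [this, card_product, hin, hout]
  calc #{T ∈ blockDesigns S p | x ∈ T ∧ y ∉ T} * (#(S i) * (#(S i) - 1))
      = ∑ z ∈ (S i).offDiag, #{T ∈ blockDesigns S p | z.1 ∈ T ∧ z.2 ∉ T} := by
        rw [sum_const_nat fun z hz => card_filter_mem_not_mem_eq hS (mem_offDiag.1 hz).1
          (mem_offDiag.1 hz).2.1 hx hy (mem_offDiag.1 hz).2.2 hxy, offDiag_card, ← Nat.mul_sub_one,
          mul_comm]
    _ = ∑ T ∈ blockDesigns S p, #{z ∈ (S i).offDiag | z.1 ∈ T ∧ z.2 ∉ T} :=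
        sum_card_bipartiteAbove_eq_sum_card_bipartiteBelow _
    _ = #(blockDesigns S p) * (p * q) := sum_const_nat hpairs

lemma sum_ite_mul_eq_sum_sum_sub (hS : Pairwise (Disjoint on S)) (hcard : #(S i) = p + q)
    (hv : v ∈ S i) (φ : Finset V → ℝ) :
    ∑ T ∈ blockDesigns S p, (if v ∈ T then (q : ℝ) else -(p : ℝ)) * φ T =
      ∑ u ∈ S i, ∑ T ∈ blockDesigns S p with v ∈ T ∧ u ∉ T,
        (φ T - φ ((Equiv.swap v u).finsetCongr T)) := by
  have hswap : ∀ u ∈ S i, ∑ T ∈ blockDesigns S p with v ∈ T ∧ u ∉ T,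
      φ ((Equiv.swap v u).finsetCongr T) = ∑ T ∈ blockDesigns S p with u ∈ T ∧ v ∉ T, φ T := by
    intro u hu
    have hmap := map_swap_filter_blockDesigns (p := p) hS hv hu v u
    rw [Equiv.swap_apply_left, Equiv.swap_apply_right] at hmap
    rw [← hmap, sum_map]
    rfl
  simp_rw [sum_sub_distrib]
  rw [sum_congr rfl hswap, sum_sum_filter_eq_sum_card_filter_smul,
    sum_sum_filter_eq_sum_card_filter_smul, ← sum_sub_distrib]
  refine sum_congr rfl fun T hT => ?_
  have hin : #(S i ∩ T) = p := inter_comm T (S i) ▸ mem_blockDesigns.1 hT i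
  have hout : #(S i \ T) = q := by have := card_sdiff_add_card_inter (S i) T; omega
  by_cases hvT : v ∈ T
  · simp [hvT, ← sdiff_eq_filter, hout]
  · simp [hvT, filter_mem_eq_inter, hin]

lemma abs_sum_ite_mul_mul_le (hS : Pairwise (Disjoint on S)) (hcard : #(S i) = p + q)
    (hv : v ∈ S i) {N : Finset V} (hvN : v ∉ N) {c : ℝ} (φ : Finset V → ℝ)
    (hφ : ∀ T u, v ∈ T → u ∉ T →
      |φ T - φ ((Equiv.swap v u).finsetCongr T)| ≤ if u ∈ N then c else 0) :
    |∑ T ∈ blockDesigns S p, (if v ∈ T then (q : ℝ) else -(p : ℝ)) * φ T| *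
        (#(S i) * (#(S i) - 1) : ℕ) ≤
      c * #(S i ∩ N) * (#(blockDesigns S p) * (p * q) : ℕ) := by
  rw [sum_ite_mul_eq_sum_sum_sub hS hcard hv]
  calc _ ≤ (∑ u ∈ S i, ∑ T ∈ blockDesigns S p with v ∈ T ∧ u ∉ T, if u ∈ N then c else 0) *
        (#(S i) * (#(S i) - 1) : ℕ) := by
        gcongr
        refine (abs_sum_le_sum_abs _ _).trans <| sum_le_sum fun u _ =>
          (abs_sum_le_sum_abs _ _).trans <| sum_le_sum fun T hT => ?_
        obtain ⟨-, hvT, huT⟩ := mem_filter.1 hT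
        exact hφ T u hvT huT
    _ = ∑ u ∈ S i ∩ N,
          c * (#{T ∈ blockDesigns S p | v ∈ T ∧ u ∉ T} * (#(S i) * (#(S i) - 1)) : ℕ) := by
        rw [sum_mul, ← filter_mem_eq_inter, sum_filter]
        refine sum_congr rfl fun u _ => ?_
        split_ifs
        · rw [sum_const, nsmul_eq_mul]
          push_cast
          ring
        · simp
    _ = c * #(S i ∩ N) * (#(blockDesigns S p) * (p * q) : ℕ) := by
        rw [sum_congr rfl fun u hu => by
          rw [card_filter_mem_not_mem_mul hS hcard hv (mem_inter.1 hu).1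
            (ne_of_mem_of_not_mem (mem_inter.1 hu).2 hvN).symm],
          sum_const, nsmul_eq_mul]
        ring

end BlockDesigns

lemma min_div_le_min_div_of_le {a t t₀ : ℝ} (ha : 0 ≤ a) (ht₀ : 0 < t₀) (h : t₀ ≤ t) :
    min a t / t ≤ min a t₀ / t₀ := by
  rw [← min_div_div_right (ht₀.trans_le h).le, ← min_div_div_right ht₀.le,
    div_self (ht₀.trans_le h).ne', div_self ht₀.ne']
  exact min_le_min_right 1 (div_le_div_of_nonneg_left ha ht₀ h)

namespace SimpleGraph

variable {V : Type*} [Fintype V] (G : SimpleGraph V) [DecidableRel G.Adj]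

/-- `‖f‖_{d_K} ≤ 1` on `B = {(a, b) | a + b ∈ d(V(G))}`. -/
def IsDKLipschitz (K₁ K₂ : ℝ) (f : ℕ × ℕ → ℝ) : Prop :=
  ∀ u u' : ℕ × ℕ,
    (∃ v : V, u.1 + u.2 = G.degree v) → (∃ v : V, u'.1 + u'.2 = G.degree v) →
    |f u - f u'| ≤
      K₁ * |((u.1 : ℝ) + u.2) - ((u'.1 : ℝ) + u'.2)| / (G.maxDegree : ℝ) +
      K₂ * |(u.1 : ℝ) / ((u.1 : ℝ) + u.2) - (u'.1 : ℝ) / ((u'.1 : ℝ) + u'.2)|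

variable {G} {K₁ K₂ : ℝ} {f : ℕ × ℕ → ℝ} {u v : V}

lemma IsDKLipschitz.abs_sub_le (hf : G.IsDKLipschitz K₁ K₂ f) {a b : ℕ}
    (hab : a + (b + 1) = G.degree v) : |f (a, b + 1) - f (a + 1, b)| ≤ K₂ / G.degree v := by
  have h := hf (a, b + 1) (a + 1, b) ⟨v, hab⟩ ⟨v, by omega⟩
  have hd : (a : ℝ) + (b + 1 : ℕ) = G.degree v := by exact_mod_cast hab
  have hd' : (a + 1 : ℕ) + (b : ℝ) = G.degree v := by push_cast at hd ⊢; linarith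
  rw [hd, hd', sub_self, abs_zero, mul_zero, zero_div, zero_add, div_sub_div_same] at h
  have hdiff : (a : ℝ) - (a + 1 : ℕ) = -1 := by push_cast; ring
  rwa [hdiff, neg_div, abs_neg, abs_one_div, Nat.abs_cast, mul_one_div] at h

variable [DecidableEq V] {T : Finset V}

variable (G) in
def exposure (v : V) (T : Finset V) : ℕ × ℕ :=
  (#(T ∩ G.neighborFinset v), #(G.neighborFinset v \ T))

variable (G) in
lemma exposure_fst_add_snd (v : V) (T : Finset V) :
    (G.exposure v T).1 + (G.exposure v T).2 = G.degree v := by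
  rw [exposure, inter_comm, add_comm, card_sdiff_add_card_inter, card_neighborFinset_eq_degree]

lemma IsDKLipschitz.abs_sub_exposure_le (hf : G.IsDKLipschitz K₁ K₂ f) (hvT : v ∈ T)
    (huT : u ∉ T) :
    |f (G.exposure v T) - f (G.exposure v ((Equiv.swap v u).finsetCongr T))| ≤
      if u ∈ G.neighborFinset v then K₂ / G.degree v else 0 := by
  have hvN : v ∉ G.neighborFinset v := G.notMem_neighborFinset_self v
  split_ifs with hu
  · rw [map_swap_eq_insert_erase hvT huT]
    set T' := insert u (T.erase v)
    have hfst : (G.exposure v T').1 = (G.exposure v T).1 + 1 := by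
      rw [exposure, exposure, insert_inter_of_mem hu, erase_inter, erase_eq_of_notMem
        (fun h => hvN (mem_inter.1 h).2), card_insert_of_notMem (fun h => huT (mem_inter.1 h).1)]
    have hT := G.exposure_fst_add_snd v T
    have hT' := G.exposure_fst_add_snd v T'
    have hexp : G.exposure v T = ((G.exposure v T).1, (G.exposure v T').2 + 1) :=
      Prod.ext rfl (by omega)
    have hexp' : G.exposure v T' = ((G.exposure v T).1 + 1, (G.exposure v T').2) :=
      Prod.ext hfst rfl
    rw [hexp, hexp']
    exact hf.abs_sub_le (by omega)
  · have hN : (Equiv.swap v u).finsetCongr (G.neighborFinset v) = G.neighborFinset v :=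
      map_swap_eq_self (iff_of_false hvN hu)
    have hexp : G.exposure v ((Equiv.swap v u).finsetCongr T) = G.exposure v T := by
      rw [exposure, exposure]
      conv_lhs => rw [← hN]
      simp only [Equiv.finsetCongr_apply, ← Finset.map_inter, ← Finset.map_sdiff, card_map]
    rw [hexp, sub_self, abs_zero]

variable (G) in
lemma card_inter_neighborFinset_le {s : Finset V} (hv : v ∈ s) :
    #(s ∩ G.neighborFinset v) ≤ min (#s - 1) (G.degree v) := by
  refine le_min ?_ ?_
  · rw [← card_erase_of_mem hv]
    exact card_le_card fun u hu =>
      mem_erase.2 ⟨ne_of_mem_of_not_mem (mem_inter.1 hu).2 (G.notMem_neighborFinset_self v),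
        (mem_inter.1 hu).1⟩
  · exact (card_le_card inter_subset_right).trans (card_neighborFinset_eq_degree G v).le

variable {ι : Type*} {S : ι → Finset V} {p q : ℕ} {i : ι}

lemma IsDKLipschitz.abs_sum_ite_mul_exposure_le (hf : G.IsDKLipschitz K₁ K₂ f) (hK₂ : 0 ≤ K₂)
    (hS : Pairwise (Disjoint on S)) (hcard : #(S i) = p + q) (hv : v ∈ S i)
    (hδ : 0 < G.minDegree) :
    |∑ T ∈ blockDesigns S p, (if v ∈ T then (q : ℝ) else -(p : ℝ)) * f (G.exposure v T)| *
        ((p + q : ℝ) * (p + q - 1)) ≤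
      #(blockDesigns S p) * (p * q) *
        (K₂ * (min ((p + q : ℝ) - 1) G.minDegree / G.minDegree)) := by
  have hbound := abs_sum_ite_mul_mul_le hS hcard hv (G.notMem_neighborFinset_self v)
    (c := K₂ / G.degree v) (f ∘ G.exposure v) fun T u hvT huT => hf.abs_sub_exposure_le hvT huT
  have hr : 1 ≤ p + q := hcard ▸ card_pos.2 ⟨v, hv⟩
  have hdeg : (G.minDegree : ℝ) ≤ G.degree v := by exact_mod_cast G.minDegree_le_degree v
  have hδ' : (0 : ℝ) < G.minDegree := by exact_mod_cast hδ
  have hratio : (#(S i ∩ G.neighborFinset v) : ℝ) / G.degree v ≤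
      min ((p + q : ℝ) - 1) G.minDegree / G.minDegree := by
    have hcap : (#(S i ∩ G.neighborFinset v) : ℝ) ≤ min ((p + q : ℝ) - 1) (G.degree v) := by
      have := G.card_inter_neighborFinset_le hv
      rw [hcard] at this
      exact_mod_cast this
    calc _ ≤ min ((p + q : ℝ) - 1) (G.degree v) / G.degree v := by gcongr
      _ ≤ _ := min_div_le_min_div_of_le (sub_nonneg.2 (by exact_mod_cast hr)) hδ' hdeg
  push_cast [hcard, Nat.cast_sub hr] at hbound
  calc _ ≤ K₂ * (#(S i ∩ G.neighborFinset v) / G.degree v) * (#(blockDesigns S p) * (p * q)) := by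
        simpa only [mul_div_assoc', div_mul_eq_mul_div, Function.comp_apply] using hbound
    _ ≤ _ := by
        rw [mul_comm]
        gcongr

lemma IsDKLipschitz.abs_sum_sum_ite_mul_exposure_le (hf : G.IsDKLipschitz K₁ K₂ f)
    (hK₂ : 0 ≤ K₂) (hS : Pairwise (Disjoint on S)) (hcard : ∀ i, #(S i) = p + q)
    (hcover : ∀ v, ∃ i, v ∈ S i) (hpq : 2 ≤ p + q) (hδ : 0 < G.minDegree) :
    |∑ v, ∑ T ∈ blockDesigns S p, (if v ∈ T then (q : ℝ) else -(p : ℝ)) * f (G.exposure v T)| ≤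
      Fintype.card V * (#(blockDesigns S p) * (p * q) *
        (K₂ * (min ((p + q : ℝ) - 1) G.minDegree / G.minDegree)) / ((p + q) * (p + q - 1))) := by
  have hpq' : (2 : ℝ) ≤ p + q := by exact_mod_cast hpq
  calc _ ≤ ∑ v, |∑ T ∈ blockDesigns S p,
          (if v ∈ T then (q : ℝ) else -(p : ℝ)) * f (G.exposure v T)| := abs_sum_le_sum_abs _ _
    _ ≤ ∑ _v : V, #(blockDesigns S p) * (p * q) *
          (K₂ * (min ((p + q : ℝ) - 1) G.minDegree / G.minDegree)) / ((p + q) * (p + q - 1)) :=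
        sum_le_sum fun v _ => by
        obtain ⟨i, hv⟩ := hcover v
        rw [le_div_iff₀ (by nlinarith)]
        exact hf.abs_sum_ite_mul_exposure_le hK₂ hS (hcard i) hv hδ
    _ = _ := by rw [sum_const, card_univ, nsmul_eq_mul]

lemma IsDKLipschitz.abs_sum_div_card_le (hf : G.IsDKLipschitz K₁ K₂ f) (hK₁ : 0 ≤ K₁)
    (hK₂ : 0 ≤ K₂) (hS : Pairwise (Disjoint on S)) (hcard : ∀ i, #(S i) = p + q)
    (hcover : ∀ v, ∃ i, v ∈ S i) (hp : 1 ≤ p) (hq : 1 ≤ q) {n : ℕ} (hn : 1 ≤ n)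
    (hV : Fintype.card V = (p + q) * n) (hNoIso : ∀ v, 0 < G.degree v) :
    |(∑ T ∈ blockDesigns S p, 1 / ((p : ℝ) * q * n) *
        ∑ v, (if v ∈ T then (q : ℝ) else -(p : ℝ)) * f (G.exposure v T)) /
        #(blockDesigns S p)| ≤
      min ((p + q : ℝ) - 1) G.minDegree * (K₁ + K₂) / ((p + q - 1) * G.minDegree) := by
  have : Nonempty V := Fintype.card_pos_iff.1 (by rw [hV]; exact Nat.mul_pos (by omega) hn)
  have hδ : 0 < G.minDegree := by
    obtain ⟨v, hv⟩ := G.exists_minimal_degree_vertex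
    exact hv ▸ hNoIso v
  have hsum := hf.abs_sum_sum_ite_mul_exposure_le hK₂ hS hcard hcover (by omega) hδ
  have hpq : (2 : ℝ) ≤ p + q := by exact_mod_cast (by omega : 2 ≤ p + q)
  have hpqn : (0 : ℝ) < p * q * n := by exact_mod_cast Nat.mul_pos (Nat.mul_pos hp hq) hn
  have hδ' : (0 : ℝ) < G.minDegree := by exact_mod_cast hδ
  have hM : 0 ≤ min ((p + q : ℝ) - 1) G.minDegree := le_min (by linarith) hδ'.le
  have hden : 0 < ((p + q : ℝ) - 1) * G.minDegree := mul_pos (by linarith) hδ'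
  rw [abs_div, Nat.abs_cast]
  refine div_le_of_le_mul₀ (Nat.cast_nonneg _) (div_nonneg (mul_nonneg hM (by linarith))
    hden.le) ?_
  calc _ = |∑ v, ∑ T ∈ blockDesigns S p, (if v ∈ T then (q : ℝ) else -(p : ℝ)) *
        f (G.exposure v T)| / (p * q * n) := by
        rw [← mul_sum, sum_comm, one_div_mul_eq_div, abs_div, abs_of_pos hpqn]
    _ ≤ min ((p + q : ℝ) - 1) G.minDegree * K₂ / ((p + q - 1) * G.minDegree) *
          #(blockDesigns S p) := by
        rw [div_le_iff₀ hpqn]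
        refine hsum.trans (le_of_eq ?_)
        rw [hV]
        push_cast
        field_simp
    _ ≤ _ := by gcongr; linarith

end SimpleGraph

section RankBlocks

variable {V : Type*} [DecidableEq V] {r n : ℕ} {w : Fin (r * n) → V}

lemma Fin.card_filter_val_div_eq (hr : 0 < r) (i : Fin n) :
    #{j : Fin (r * n) | j.1 / r = i.1} = r := by
  have hdiv : ∀ m : ℕ, m / r = i ↔ r * i ≤ m ∧ m < r * i + r := fun m => by
    rw [le_antisymm_iff, ← Nat.lt_succ_iff, Nat.div_lt_iff_lt_mul hr, Nat.le_div_iff_mul_le hr,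
      Nat.succ_mul, mul_comm, and_comm]
  have hlt : r * i + r ≤ r * n := by nlinarith [i.isLt]
  have hIco : ({j : Fin (r * n) | j.1 / r = i.1} : Finset _).map Fin.valEmbedding =
      Ico (r * i) (r * i + r) := by
    ext m
    simp only [mem_map, mem_filter, mem_univ, true_and, Fin.valEmbedding_apply, mem_Ico]
    constructor
    · rintro ⟨j, hj, rfl⟩
      exact (hdiv j).1 hj
    · intro hm
      exact ⟨⟨m, by omega⟩, (hdiv m).2 hm, rfl⟩
  rw [← card_map, hIco, Nat.card_Ico, Nat.add_sub_cancel_left]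

variable (w) in
def rankBlock (i : Fin n) : Finset V :=
  ({j : Fin (r * n) | j.1 / r = i.1} : Finset _).image w

lemma pairwise_disjoint_rankBlock (hw : Injective w) : Pairwise (Disjoint on rankBlock w) := by
  intro i j hij
  refine disjoint_left.2 fun x hi hj => ?_
  obtain ⟨a, ha, rfl⟩ := mem_image.1 hi
  obtain ⟨b, hb, hab⟩ := mem_image.1 hj
  obtain rfl := hw hab
  exact hij (Fin.ext ((mem_filter.1 ha).2.symm.trans (mem_filter.1 hb).2))

lemma card_rankBlock (hw : Injective w) (hr : 0 < r) (i : Fin n) : #(rankBlock w i) = r := by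
  rw [rankBlock, card_image_of_injective _ hw, Fin.card_filter_val_div_eq hr]

lemma exists_mem_rankBlock (hw : Surjective w) (x : V) : ∃ i, x ∈ rankBlock w i := by
  obtain ⟨j, rfl⟩ := hw x
  exact ⟨⟨j / r, Nat.div_lt_of_lt_mul j.isLt⟩, mem_image_of_mem _ (mem_filter.2 ⟨mem_univ _, rfl⟩)⟩

end RankBlocks

theorem stmt19_general
    {V : Type*} [Fintype V] [DecidableEq V]
    (G : SimpleGraph V) [DecidableRel G.Adj]
    (p q r n : ℕ) (hp : 1 ≤ p) (hq : 1 ≤ q) (hr : r = p + q) (hn : 1 ≤ n)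
    (hcard : Fintype.card V = r * n)
    (hNoIso : ∀ v : V, 0 < G.degree v)
    (w : Fin (r * n) → V) (hw : Function.Bijective w)
    (K₁ K₂ : ℝ) (hK₁ : 0 ≤ K₁) (hK₂ : 0 < K₂)
    (f : ℕ × ℕ → ℝ)
    (hf : ∀ u u' : ℕ × ℕ,
      (∃ v : V, u.1 + u.2 = G.degree v) → (∃ v : V, u'.1 + u'.2 = G.degree v) →
      |f u - f u'| ≤
        K₁ * |((u.1 : ℝ) + u.2) - ((u'.1 : ℝ) + u'.2)| / (G.maxDegree : ℝ) +
        K₂ * |(u.1 : ℝ) / ((u.1 : ℝ) + u.2) - (u'.1 : ℝ) / ((u'.1 : ℝ) + u'.2)|) :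
    let S : Fin n → Finset V := fun i =>
      (univ.filter (fun j : Fin (r * n) => j.1 / r = i.1)).image w
    let D : Finset (Finset V) :=
      univ.filter (fun T : Finset V => ∀ i : Fin n, (T ∩ S i).card = p)
    let xi : Finset V → ℝ := fun T =>
      (1 / ((p : ℝ) * q * n)) *
        ∑ v, (if v ∈ T then (q : ℝ) else -(p : ℝ)) *
          f ((T ∩ G.neighborFinset v).card, (G.neighborFinset v \ T).card)
    |(∑ T ∈ D, xi T) / (D.card : ℝ)| ≤
      (min ((r : ℝ) - 1) (G.minDegree : ℝ)) * (K₁ + K₂) /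
        (((r : ℝ) - 1) * (G.minDegree : ℝ)) := by
  intro S D xi
  have hD : D = blockDesigns (rankBlock w) p := by ext T; simp [D, S, rankBlock]
  have hrR : (r : ℝ) = p + q := by exact_mod_cast hr
  rw [hD, hrR]
  exact SimpleGraph.IsDKLipschitz.abs_sum_div_card_le hf hK₁ hK₂.le
    (pairwise_disjoint_rankBlock hw.injective)
    (fun i => (card_rankBlock hw.injective (by omega) i).trans hr)
    (exists_mem_rankBlock hw.surjective) hp hq hn (hr ▸ hcard) hNoIso

/-- for the partitioning-by-degree design `T = T_{B,P*}` (vertices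
enumerated by the bijection `w` in nonincreasing degree order, blocks formed by
`r` consecutive ranks, and a uniform `p`-subset of each block treated
independently — equivalently `T` uniform over all subsets meeting each block in
exactly `p` elements), if the symmetric interference function `f` satisfies
`‖f‖_{d_K} ≤ 1` on `B` then
`|E_T[ξ]| ≤ min{r−1, d_min} (K_1 + K_2) / ((r−1) d_min)`. -/
theorem stmt19
    {V : Type*} [Fintype V] [DecidableEq V]
    (G : SimpleGraph V) [DecidableRel G.Adj]
    (p q r n : ℕ) (hp : 1 ≤ p) (hq : 1 ≤ q) (hr : r = p + q) (hn : 1 ≤ n)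
    (hcard : Fintype.card V = r * n)
    (hNoIso : ∀ v : V, 0 < G.degree v)
    (w : Fin (r * n) → V) (hw : Function.Bijective w)
    (hmono : ∀ i j : Fin (r * n), i ≤ j → G.degree (w j) ≤ G.degree (w i))
    (K₁ K₂ : ℝ) (hK₁ : 0 ≤ K₁) (hK₂ : 0 < K₂)
    (f : ℕ × ℕ → ℝ)
    (hf : ∀ u u' : ℕ × ℕ,
      (∃ v : V, u.1 + u.2 = G.degree v) → (∃ v : V, u'.1 + u'.2 = G.degree v) →
      |f u - f u'| ≤
        K₁ * |((u.1 : ℝ) + u.2) - ((u'.1 : ℝ) + u'.2)| / (G.maxDegree : ℝ) +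
        K₂ * |(u.1 : ℝ) / ((u.1 : ℝ) + u.2) - (u'.1 : ℝ) / ((u'.1 : ℝ) + u'.2)|) :
    let S : Fin n → Finset V := fun i =>
      (univ.filter (fun j : Fin (r * n) => j.1 / r = i.1)).image w
    let D : Finset (Finset V) :=
      univ.filter (fun T : Finset V => ∀ i : Fin n, (T ∩ S i).card = p)
    let xi : Finset V → ℝ := fun T =>
      (1 / ((p : ℝ) * q * n)) *
        ∑ v, (if v ∈ T then (q : ℝ) else -(p : ℝ)) *
          f ((T ∩ G.neighborFinset v).card, (G.neighborFinset v \ T).card)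
    |(∑ T ∈ D, xi T) / (D.card : ℝ)| ≤
      (min ((r : ℝ) - 1) (G.minDegree : ℝ)) * (K₁ + K₂) /
        (((r : ℝ) - 1) * (G.minDegree : ℝ)) :=
  stmt19_general G p q r n hp hq hr hn hcard hNoIso w hw K₁ K₂ hK₁ hK₂ f hf
end
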